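/- arXiv:2509.06841 — 5 statements merged into one kernel-verified Lean document; each statement's English description precedes it below -/
import Mathlib

section
/- Let G and H be finite simple graphs such that H has at least one vertex. Then there exists a surjective locally surjective homomorphism from G onto H if and only if there exists a surjective p-morphism from Pos(G) onto Pos(H). -/
/-!
A homomorphism `g : G →g H` induces a map `Pos(G) → Pos(H)` acting as `g` on `V`, `V_a` and
`V_b`, fixing `⊤₁, ⊤₂, ∞_a, ∞_b`, and sending the edge element of a dart `d` (the one above
`d.fst` in `V_a` and `d.snd` in `V_b`) to that of `g d`; the backward property of this map is
local surjectivity of `g`, read on darts.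

Conversely, a surjective p-morphism maps the four maximal elements of `Pos(G)` bijectively onto
those of `Pos(H)`, so it preserves the number of maximal elements above each point: four above
`V`, three above `V_a ∪ V_b`, two above the edge elements. It therefore restricts to a surjection
`g` on vertices. Up to the automorphism exchanging the `a`-side and the `b`-side it sends `V_a`
to `V_a` and `V_b` to `V_b`, and comparing the vertices below edge elements shows that `g` is a
locally surjective homomorphism.
-/

/-- The carrier of the poset `Pos(G)`: vertices, two copies of the vertices,
two copies of the edges, and four auxiliary elements. -/
inductive PosElem (V E : Type) : Type where
  | ver (v : V)
  | verA (v : V)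
  | verB (v : V)
  | edge1 (e : E)
  | edge2 (e : E)
  | top1
  | top2
  | infA
  | infB

/-- The covering relation of the poset `Pos(G)`, for a graph `G` together with a
choice `ε` of an ordered pair of endpoints for each edge. -/
inductive PosCov {V : Type} (G : SimpleGraph V) (ε : ↥G.edgeSet → V × V) :
    PosElem V ↥G.edgeSet → PosElem V ↥G.edgeSet → Prop where
  | ver_verA (v : V) : PosCov G ε (.ver v) (.verA v)
  | ver_verB (v : V) : PosCov G ε (.ver v) (.verB v)
  | verA_infA (v : V) : PosCov G ε (.verA v) .infA
  | verB_infB (v : V) : PosCov G ε (.verB v) .infB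
  | edge1_top1 (e : ↥G.edgeSet) : PosCov G ε (.edge1 e) .top1
  | edge1_top2 (e : ↥G.edgeSet) : PosCov G ε (.edge1 e) .top2
  | edge2_top1 (e : ↥G.edgeSet) : PosCov G ε (.edge2 e) .top1
  | edge2_top2 (e : ↥G.edgeSet) : PosCov G ε (.edge2 e) .top2
  | isolA_top1 (v : V) (hv : ∀ w, ¬ G.Adj v w) : PosCov G ε (.verA v) .top1
  | isolA_top2 (v : V) (hv : ∀ w, ¬ G.Adj v w) : PosCov G ε (.verA v) .top2
  | isolB_top1 (v : V) (hv : ∀ w, ¬ G.Adj v w) : PosCov G ε (.verB v) .top1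
  | isolB_top2 (v : V) (hv : ∀ w, ¬ G.Adj v w) : PosCov G ε (.verB v) .top2
  | ua_edge1 (e : ↥G.edgeSet) : PosCov G ε (.verA (ε e).1) (.edge1 e)
  | vb_edge1 (e : ↥G.edgeSet) : PosCov G ε (.verB (ε e).2) (.edge1 e)
  | ub_edge2 (e : ↥G.edgeSet) : PosCov G ε (.verB (ε e).1) (.edge2 e)
  | va_edge2 (e : ↥G.edgeSet) : PosCov G ε (.verA (ε e).2) (.edge2 e)

/-- The order of `Pos(G)`: the reflexive-transitive closure of the covering relation. -/
def PosLe {V : Type} (G : SimpleGraph V) (ε : ↥G.edgeSet → V × V)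
    (x y : PosElem V ↥G.edgeSet) : Prop :=
  Relation.ReflTransGen (PosCov G ε) x y

/-- `ε` assigns to every edge an ordered pair of its two endpoints. -/
def OrientOK {V : Type} (G : SimpleGraph V) (ε : ↥G.edgeSet → V × V) : Prop :=
  ∀ e : ↥G.edgeSet, (e : Sym2 V) = s((ε e).1, (ε e).2)

/-- A p-morphism with respect to given order relations: the homomorphism property (HP)
and the backward property (BP). -/
def IsPMorphismRel {α β : Type} (leP : α → α → Prop) (leQ : β → β → Prop)
    (h : α → β) : Prop :=
  (∀ x y, leP x y → leQ (h x) (h y)) ∧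
  (∀ (x : α) (y : β), leQ (h x) y → ∃ z : α, leP x z ∧ h z = y)

/-- A locally surjective graph homomorphism: the homomorphism property (HP) and
the backward property (BP) for graphs. -/
def IsLocallySurjHom {VG VH : Type} (G : SimpleGraph VG) (H : SimpleGraph VH)
    (g : VG → VH) : Prop :=
  (∀ u v : VG, G.Adj u v → H.Adj (g u) (g v)) ∧
  (∀ (u : VG) (w : VH), H.Adj (g u) w → ∃ v : VG, G.Adj u v ∧ g v = w)

open Function

section PMorphism

variable {α β γ : Type} {leP : α → α → Prop} {leQ : β → β → Prop} {leR : γ → γ → Prop}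

def IsMaxRel (le : α → α → Prop) (m : α) : Prop :=
  ∀ y, le m y → y = m

def maxAbove (le : α → α → Prop) (x : α) : Set α :=
  {m | le x m ∧ IsMaxRel le m}

namespace IsPMorphismRel

variable {h : α → β}

theorem comp {k : β → γ} (hk : IsPMorphismRel leQ leR k) (hh : IsPMorphismRel leP leQ h) :
    IsPMorphismRel leP leR (k ∘ h) := by
  refine ⟨fun x y hxy => hk.1 _ _ (hh.1 x y hxy), fun x y hy => ?_⟩
  obtain ⟨z, hxz, rfl⟩ := hk.2 (h x) y hy
  obtain ⟨w, hxw, rfl⟩ := hh.2 x z hxz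
  exact ⟨w, hxw, rfl⟩

theorem of_involutive {s : α → α} (hs : Involutive s)
    (hmono : ∀ x y, leP x y → leP (s x) (s y)) : IsPMorphismRel leP leP s :=
  ⟨hmono, fun x y hy => ⟨s y, by simpa only [hs x] using hmono _ _ hy, hs y⟩⟩

theorem isMaxRel_apply (hh : IsPMorphismRel leP leQ h) {m : α} (hm : IsMaxRel leP m) :
    IsMaxRel leQ (h m) := fun y hy => by
  obtain ⟨z, hmz, rfl⟩ := hh.2 m y hy
  rw [hm z hmz]

variable (hh : IsPMorphismRel leP leQ h) (hP : ∀ x, ∃ m, leP x m ∧ IsMaxRel leP m)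
include hh hP

theorem image_setOf_isMaxRel (hs : Surjective h) :
    h '' {m | IsMaxRel leP m} = {t | IsMaxRel leQ t} := by
  refine Set.Subset.antisymm (Set.image_subset_iff.2 fun m hm => hh.isMaxRel_apply hm) ?_
  intro t ht
  obtain ⟨x, rfl⟩ := hs t
  obtain ⟨m, hxm, hm⟩ := hP x
  exact ⟨m, hm, ht _ (hh.1 x m hxm)⟩

theorem maxAbove_apply [IsTrans α leP] (x : α) :
    maxAbove leQ (h x) = h '' maxAbove leP x := by
  ext t
  constructor
  · rintro ⟨hxt, ht⟩
    obtain ⟨z, hxz, rfl⟩ := hh.2 x t hxt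
    obtain ⟨m, hzm, hm⟩ := hP z
    exact ⟨m, ⟨_root_.trans hxz hzm, hm⟩, ht _ (hh.1 z m hzm)⟩
  · rintro ⟨m, ⟨hxm, hm⟩, rfl⟩
    exact ⟨hh.1 x m hxm, hh.isMaxRel_apply hm⟩

theorem injOn_setOf_isMaxRel (hs : Surjective h) (hfin : {m | IsMaxRel leP m}.Finite)
    (hcard : {m | IsMaxRel leP m}.ncard = {t | IsMaxRel leQ t}.ncard) :
    Set.InjOn h {m | IsMaxRel leP m} :=
  Set.injOn_of_ncard_image_eq (by rw [hh.image_setOf_isMaxRel hP hs, hcard]) hfin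

theorem ncard_maxAbove_apply [IsTrans α leP] (hinj : Set.InjOn h {m | IsMaxRel leP m})
    (x : α) : (maxAbove leQ (h x)).ncard = (maxAbove leP x).ncard := by
  rw [hh.maxAbove_apply hP, (hinj.mono fun _ hm => hm.2).ncard_image]

end IsPMorphismRel

end PMorphism

open PosElem

section Pos

variable {V : Type} {G : SimpleGraph V} {ε : G.edgeSet → V × V}

/-- The order of `Pos(G)`, written out case by case. -/
def PosLeSpec (ε : G.edgeSet → V × V) : PosElem V G.edgeSet → PosElem V G.edgeSet → Prop
  | ver v, ver w => v = w
  | ver v, verA w => v = w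
  | ver v, verB w => v = w
  | ver v, edge1 e => v = (ε e).1 ∨ v = (ε e).2
  | ver v, edge2 e => v = (ε e).1 ∨ v = (ε e).2
  | ver _, _ => True
  | verA v, verA w => v = w
  | verA v, edge1 e => v = (ε e).1
  | verA v, edge2 e => v = (ε e).2
  | verA _, infA | verA _, top1 | verA _, top2 => True
  | verB v, verB w => v = w
  | verB v, edge1 e => v = (ε e).2
  | verB v, edge2 e => v = (ε e).1
  | verB _, infB | verB _, top1 | verB _, top2 => True
  | edge1 e, edge1 f => e = f
  | edge2 e, edge2 f => e = f
  | edge1 _, top1 | edge1 _, top2 | edge2 _, top1 | edge2 _, top2 => True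
  | top1, top1 | top2, top2 | infA, infA | infB, infB => True
  | _, _ => False

theorem PosLe.spec {x y : PosElem V G.edgeSet} (hxy : PosLe G ε x y) : PosLeSpec ε x y := by
  induction hxy with
  | refl => cases x <;> simp [PosLeSpec]
  | tail _ hcov ih => cases hcov <;> cases x <;> simp_all [PosLeSpec]

instance : IsTrans _ (PosLe G ε) := ⟨fun _ _ _ => Relation.ReflTransGen.trans⟩

def PosElem.level {V E : Type} : PosElem V E → ℕ
  | ver _ => 4
  | verA _ | verB _ => 3
  | edge1 _ | edge2 _ => 2
  | top1 | top2 | infA | infB => 1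

theorem OrientOK.adj (hε : OrientOK G ε) (e : G.edgeSet) : G.Adj (ε e).1 (ε e).2 :=
  G.mem_edgeSet.1 (hε e ▸ e.2)

def OrientOK.dart (hε : OrientOK G ε) (e : G.edgeSet) : G.Dart :=
  ⟨ε e, hε.adj e⟩

theorem OrientOK.exists_eq_dart (hε : OrientOK G ε) (d : G.Dart) :
    ∃ e, d = hε.dart e ∨ d = (hε.dart e).symm := by
  refine ⟨⟨d.edge, d.edge_mem⟩, ?_⟩
  rcases Sym2.mk_eq_mk_iff.1 (hε ⟨d.edge, d.edge_mem⟩) with hd | hd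
  · exact .inl (SimpleGraph.Dart.ext _ _ hd)
  · exact .inr (SimpleGraph.Dart.ext _ _ hd)

open Classical in
/-- The element of `Pos(G)` lying above `d.fst` in `V_a` and `d.snd` in `V_b`. -/
noncomputable def dartElem (ε : G.edgeSet → V × V) (d : G.Dart) : PosElem V G.edgeSet :=
  if d.fst = (ε ⟨d.edge, d.edge_mem⟩).1 then edge1 ⟨d.edge, d.edge_mem⟩
  else edge2 ⟨d.edge, d.edge_mem⟩

theorem dartElem_dart (hε : OrientOK G ε) (e : G.edgeSet) :
    dartElem ε (hε.dart e) = edge1 e := by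
  have he : (⟨(hε.dart e).edge, (hε.dart e).edge_mem⟩ : G.edgeSet) = e :=
    Subtype.ext (hε e).symm
  unfold dartElem
  split_ifs with hc
  · exact congrArg edge1 he
  · exact absurd (by rw [he]; rfl) hc

theorem dartElem_dart_symm (hε : OrientOK G ε) (e : G.edgeSet) :
    dartElem ε (hε.dart e).symm = edge2 e := by
  have he : (⟨(hε.dart e).symm.edge, (hε.dart e).symm.edge_mem⟩ : G.edgeSet) = e :=
    Subtype.ext ((SimpleGraph.Dart.edge_symm _).trans (hε e).symm)
  unfold dartElem
  split_ifs with hc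
  · rw [he] at hc
    exact absurd hc (hε.adj e).ne'
  · exact congrArg edge2 he

theorem level_dartElem (d : G.Dart) : (dartElem ε d).level = 2 := by
  unfold dartElem; split_ifs <;> rfl

theorem dartElem_le_top (d : G.Dart) {t : PosElem V G.edgeSet} (ht : t = top1 ∨ t = top2) :
    PosLe G ε (dartElem ε d) t := by
  unfold dartElem
  rcases ht with rfl | rfl <;> split_ifs <;> exact .single (by constructor)

theorem verA_le_dartElem (hε : OrientOK G ε) (d : G.Dart) :
    PosLe G ε (verA d.fst) (dartElem ε d) := by
  obtain ⟨e, rfl | rfl⟩ := hε.exists_eq_dart d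
  · rw [dartElem_dart]; exact .single (.ua_edge1 e)
  · rw [dartElem_dart_symm]; exact .single (.va_edge2 e)

theorem verB_le_dartElem (hε : OrientOK G ε) (d : G.Dart) :
    PosLe G ε (verB d.snd) (dartElem ε d) := by
  obtain ⟨e, rfl | rfl⟩ := hε.exists_eq_dart d
  · rw [dartElem_dart]; exact .single (.vb_edge1 e)
  · rw [dartElem_dart_symm]; exact .single (.ub_edge2 e)

theorem eq_fst_of_verA_le_dartElem (hε : OrientOK G ε) {a : V} {d : G.Dart}
    (h : PosLe G ε (verA a) (dartElem ε d)) : a = d.fst := by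
  obtain ⟨e, rfl | rfl⟩ := hε.exists_eq_dart d
  · rw [dartElem_dart] at h; exact h.spec
  · rw [dartElem_dart_symm] at h; exact h.spec

theorem eq_snd_of_verB_le_dartElem (hε : OrientOK G ε) {b : V} {d : G.Dart}
    (h : PosLe G ε (verB b) (dartElem ε d)) : b = d.snd := by
  obtain ⟨e, rfl | rfl⟩ := hε.exists_eq_dart d
  · rw [dartElem_dart] at h; exact h.spec
  · rw [dartElem_dart_symm] at h; exact h.spec

theorem eq_of_dartElem_le {d : G.Dart} {y : PosElem V G.edgeSet}
    (h : PosLe G ε (dartElem ε d) y) : y = dartElem ε d ∨ y = top1 ∨ y = top2 := by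
  have hs := h.spec
  unfold dartElem at hs ⊢
  split_ifs at hs ⊢ <;> cases y <;> simp_all [PosLeSpec]

theorem eq_of_verA_le (hε : OrientOK G ε) {a : V} {y : PosElem V G.edgeSet}
    (h : PosLe G ε (verA a) y) :
    y = verA a ∨ y = infA ∨ y = top1 ∨ y = top2 ∨
      ∃ d : G.Dart, d.fst = a ∧ y = dartElem ε d := by
  have hs := h.spec
  cases y <;> simp only [PosLeSpec] at hs <;> simp only [reduceCtorEq, false_or, true_or, or_true]
  · exact .inl (congrArg verA hs.symm)
  · exact ⟨hε.dart _, hs.symm, (dartElem_dart hε _).symm⟩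
  · exact ⟨(hε.dart _).symm, hs.symm, (dartElem_dart_symm hε _).symm⟩

theorem eq_of_verB_le (hε : OrientOK G ε) {b : V} {y : PosElem V G.edgeSet}
    (h : PosLe G ε (verB b) y) :
    y = verB b ∨ y = infB ∨ y = top1 ∨ y = top2 ∨
      ∃ d : G.Dart, d.snd = b ∧ y = dartElem ε d := by
  have hs := h.spec
  cases y <;> simp only [PosLeSpec] at hs <;> simp only [reduceCtorEq, false_or, true_or, or_true]
  · exact .inl (congrArg verB hs.symm)
  · exact ⟨hε.dart _, hs.symm, (dartElem_dart hε _).symm⟩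
  · exact ⟨(hε.dart _).symm, hs.symm, (dartElem_dart_symm hε _).symm⟩

def PosElem.swap {V E : Type} : PosElem V E → PosElem V E
  | ver v => ver v
  | verA v => verB v
  | verB v => verA v
  | edge1 e => edge2 e
  | edge2 e => edge1 e
  | top1 => top1
  | top2 => top2
  | infA => infB
  | infB => infA

theorem PosElem.swap_involutive {V E : Type} : Involutive (swap : PosElem V E → PosElem V E) := by
  intro x; cases x <;> rfl

theorem PosLe.swap {x y : PosElem V G.edgeSet} (h : PosLe G ε x y) : PosLe G ε x.swap y.swap :=
  Relation.ReflTransGen.lift (p := PosCov G ε) PosElem.swap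
    (fun _ _ hc => by cases hc <;> constructor <;> assumption) x y h

theorem verA_le_top (hε : OrientOK G ε) (v : V) {t : PosElem V G.edgeSet}
    (ht : t = top1 ∨ t = top2) : PosLe G ε (verA v) t := by
  by_cases hv : ∃ w, G.Adj v w
  · obtain ⟨w, hvw⟩ := hv
    exact (verA_le_dartElem hε ⟨(v, w), hvw⟩).trans (dartElem_le_top _ ht)
  · push Not at hv
    rcases ht with rfl | rfl
    exacts [.single (.isolA_top1 v hv), .single (.isolA_top2 v hv)]

theorem verB_le_top (hε : OrientOK G ε) (v : V) {t : PosElem V G.edgeSet}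
    (ht : t = top1 ∨ t = top2) : PosLe G ε (verB v) t := by
  have h := (verA_le_top hε v ht).swap
  rcases ht with rfl | rfl <;> exact h

theorem isMaxRel_posLe_iff {m : PosElem V G.edgeSet} :
    IsMaxRel (PosLe G ε) m ↔ m = top1 ∨ m = top2 ∨ m = infA ∨ m = infB := by
  constructor
  · intro hm
    cases m <;> simp only [reduceCtorEq, or_self, or_false, false_or]
    · exact nomatch hm _ (.single (.ver_verA _))
    · exact nomatch hm _ (.single (.verA_infA _))
    · exact nomatch hm _ (.single (.verB_infB _))
    · exact nomatch hm _ (.single (.edge1_top1 _))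
    · exact nomatch hm _ (.single (.edge2_top1 _))
  · rintro (rfl | rfl | rfl | rfl) y hy <;> have hs := hy.spec <;> cases y <;>
      simp_all [PosLeSpec]

theorem exists_posLe_isMaxRel (x : PosElem V G.edgeSet) :
    ∃ m, PosLe G ε x m ∧ IsMaxRel (PosLe G ε) m := by
  have hA : IsMaxRel (PosLe G ε) infA := isMaxRel_posLe_iff.2 (by simp)
  have hB : IsMaxRel (PosLe G ε) infB := isMaxRel_posLe_iff.2 (by simp)
  have h1 : IsMaxRel (PosLe G ε) top1 := isMaxRel_posLe_iff.2 (by simp)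
  cases x with
  | ver v => exact ⟨infA, .head (.ver_verA v) (.single (.verA_infA v)), hA⟩
  | verA v => exact ⟨infA, .single (.verA_infA v), hA⟩
  | verB v => exact ⟨infB, .single (.verB_infB v), hB⟩
  | edge1 e => exact ⟨top1, .single (.edge1_top1 e), h1⟩
  | edge2 e => exact ⟨top1, .single (.edge2_top1 e), h1⟩
  | top1 | top2 | infA | infB => exact ⟨_, .refl, isMaxRel_posLe_iff.2 (by simp)⟩

theorem setOf_isMaxRel_posLe :
    {m | IsMaxRel (PosLe G ε) m} = {top1, top2, infA, infB} :=
  Set.ext fun _ => isMaxRel_posLe_iff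

theorem ncard_setOf_isMaxRel_posLe : {m | IsMaxRel (PosLe G ε) m}.ncard = 4 := by
  simp [setOf_isMaxRel_posLe]

theorem finite_setOf_isMaxRel_posLe : {m | IsMaxRel (PosLe G ε) m}.Finite := by
  rw [setOf_isMaxRel_posLe]
  exact Set.toFinite _

theorem PosLe.of_spec_of_isMaxRel (hε : OrientOK G ε) {x t : PosElem V G.edgeSet}
    (ht : IsMaxRel (PosLe G ε) t) (hs : PosLeSpec ε x t) : PosLe G ε x t := by
  rcases isMaxRel_posLe_iff.1 ht with rfl | rfl | rfl | rfl <;> cases x <;>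
    simp only [PosLeSpec] at hs <;> first
    | exact .refl
    | exact verA_le_top hε _ (.inl rfl)
    | exact verA_le_top hε _ (.inr rfl)
    | exact verB_le_top hε _ (.inl rfl)
    | exact verB_le_top hε _ (.inr rfl)
    | exact .head (.ver_verA _) (verA_le_top hε _ (.inl rfl))
    | exact .head (.ver_verA _) (verA_le_top hε _ (.inr rfl))
    | exact .head (.ver_verA _) (.single (.verA_infA _))
    | exact .head (.ver_verB _) (.single (.verB_infB _))
    | exact .single (by constructor)

theorem ncard_maxAbove_posLe (hε : OrientOK G ε) (x : PosElem V G.edgeSet) :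
    (maxAbove (PosLe G ε) x).ncard = x.level := by
  classical
  have hmax : maxAbove (PosLe G ε) x =
      ↑(({top1, top2, infA, infB} : Finset _).filter (PosLeSpec ε x)) := by
    ext t
    simp only [Finset.coe_filter, Finset.mem_insert, Finset.mem_singleton]
    exact ⟨fun ⟨hle, ht⟩ => ⟨isMaxRel_posLe_iff.1 ht, hle.spec⟩,
      fun ⟨ht, hs⟩ => ⟨PosLe.of_spec_of_isMaxRel hε (isMaxRel_posLe_iff.2 ht) hs,
        isMaxRel_posLe_iff.2 ht⟩⟩
  rw [hmax, Set.ncard_coe_finset]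
  cases x <;> simp [Finset.filter_insert, Finset.filter_singleton, PosLeSpec, level]

theorem PosElem.exists_eq_ver_of_level_eq_four {E : Type} {x : PosElem V E} (hx : x.level = 4) :
    ∃ v, x = ver v := by
  cases x <;> simp_all [level]

theorem PosElem.exists_eq_verA_or_verB_of_level_eq_three {E : Type} {x : PosElem V E}
    (hx : x.level = 3) : ∃ v, x = verA v ∨ x = verB v := by
  cases x <;> simp_all [level]

theorem exists_dartElem_eq_of_level_eq_two (hε : OrientOK G ε) {x : PosElem V G.edgeSet}
    (hx : x.level = 2) : ∃ d, dartElem ε d = x := by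
  cases x with
  | edge1 e => exact ⟨hε.dart e, dartElem_dart hε e⟩
  | edge2 e => exact ⟨(hε.dart e).symm, dartElem_dart_symm hε e⟩
  | _ => simp [level] at hx

end Pos

section Forward

variable {VG VH : Type} {G : SimpleGraph VG} {H : SimpleGraph VH}
  {εG : G.edgeSet → VG × VG} {εH : H.edgeSet → VH × VH}

noncomputable def posMap (hεG : OrientOK G εG) (εH : H.edgeSet → VH × VH) (φ : G →g H) :
    PosElem VG G.edgeSet → PosElem VH H.edgeSet
  | ver v => ver (φ v)
  | verA v => verA (φ v)
  | verB v => verB (φ v)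
  | edge1 e => dartElem εH (φ.mapDart (hεG.dart e))
  | edge2 e => dartElem εH (φ.mapDart (hεG.dart e).symm)
  | top1 => top1
  | top2 => top2
  | infA => infA
  | infB => infB

variable (hεG : OrientOK G εG) (hεH : OrientOK H εH) (φ : G →g H)
  (hφ : ∀ u w, H.Adj (φ u) w → ∃ v, G.Adj u v ∧ φ v = w)

theorem posMap_dartElem (d : G.Dart) :
    posMap hεG εH φ (dartElem εG d) = dartElem εH (φ.mapDart d) := by
  obtain ⟨e, rfl | rfl⟩ := hεG.exists_eq_dart d
  · rw [dartElem_dart]; rfl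
  · rw [dartElem_dart_symm]; rfl

include hεH in
theorem posMap_posLe {x y : PosElem VG G.edgeSet} (hxy : PosLe G εG x y) :
    PosLe H εH (posMap hεG εH φ x) (posMap hεG εH φ y) := by
  refine Relation.ReflTransGen.lift' (posMap hεG εH φ) (fun a b hab => ?_) x y hxy
  cases hab with
  | ver_verA v => exact .single (.ver_verA _)
  | ver_verB v => exact .single (.ver_verB _)
  | verA_infA v => exact .single (.verA_infA _)
  | verB_infB v => exact .single (.verB_infB _)
  | edge1_top1 e | edge2_top1 e => exact dartElem_le_top _ (.inl rfl)
  | edge1_top2 e | edge2_top2 e => exact dartElem_le_top _ (.inr rfl)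
  | isolA_top1 v _ => exact verA_le_top hεH _ (.inl rfl)
  | isolA_top2 v _ => exact verA_le_top hεH _ (.inr rfl)
  | isolB_top1 v _ => exact verB_le_top hεH _ (.inl rfl)
  | isolB_top2 v _ => exact verB_le_top hεH _ (.inr rfl)
  | ua_edge1 e => exact verA_le_dartElem hεH (φ.mapDart (hεG.dart e))
  | vb_edge1 e => exact verB_le_dartElem hεH (φ.mapDart (hεG.dart e))
  | ub_edge2 e => exact verB_le_dartElem hεH (φ.mapDart (hεG.dart e).symm)
  | va_edge2 e => exact verA_le_dartElem hεH (φ.mapDart (hεG.dart e).symm)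

include hεH hφ in
theorem exists_posMap_eq_of_verA_le {v : VG} {y : PosElem VH H.edgeSet}
    (hy : PosLe H εH (verA (φ v)) y) : ∃ z, PosLe G εG (verA v) z ∧ posMap hεG εH φ z = y := by
  rcases eq_of_verA_le hεH hy with rfl | rfl | rfl | rfl | ⟨d', hd', rfl⟩
  · exact ⟨verA v, .refl, rfl⟩
  · exact ⟨infA, .single (.verA_infA v), rfl⟩
  · exact ⟨top1, verA_le_top hεG v (.inl rfl), rfl⟩
  · exact ⟨top2, verA_le_top hεG v (.inr rfl), rfl⟩
  · obtain ⟨u, hvu, hu⟩ := hφ v d'.snd (hd' ▸ d'.adj)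
    refine ⟨dartElem εG ⟨(v, u), hvu⟩, verA_le_dartElem hεG ⟨(v, u), hvu⟩, ?_⟩
    rw [posMap_dartElem]
    exact congrArg _ (SimpleGraph.Dart.ext _ _ (Prod.ext hd'.symm hu))

include hεH hφ in
theorem exists_posMap_eq_of_verB_le {v : VG} {y : PosElem VH H.edgeSet}
    (hy : PosLe H εH (verB (φ v)) y) : ∃ z, PosLe G εG (verB v) z ∧ posMap hεG εH φ z = y := by
  rcases eq_of_verB_le hεH hy with rfl | rfl | rfl | rfl | ⟨d', hd', rfl⟩
  · exact ⟨verB v, .refl, rfl⟩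
  · exact ⟨infB, .single (.verB_infB v), rfl⟩
  · exact ⟨top1, verB_le_top hεG v (.inl rfl), rfl⟩
  · exact ⟨top2, verB_le_top hεG v (.inr rfl), rfl⟩
  · obtain ⟨u, hvu, hu⟩ := hφ v d'.fst (hd' ▸ d'.adj.symm)
    refine ⟨dartElem εG ⟨(u, v), hvu.symm⟩, verB_le_dartElem hεG ⟨(u, v), hvu.symm⟩, ?_⟩
    rw [posMap_dartElem]
    exact congrArg _ (SimpleGraph.Dart.ext _ _ (Prod.ext hu hd'.symm))

include hεH hφ in
theorem posMap_isPMorphismRel : IsPMorphismRel (PosLe G εG) (PosLe H εH) (posMap hεG εH φ) := by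
  refine ⟨fun x y => posMap_posLe hεG hεH φ, fun x y hxy => ?_⟩
  cases x with
  | ver v =>
    rcases Relation.ReflTransGen.cases_head hxy with rfl | ⟨c, hc, hcy⟩
    · exact ⟨ver v, .refl, rfl⟩
    cases hc with
    | ver_verA =>
      obtain ⟨z, hvz, rfl⟩ := exists_posMap_eq_of_verA_le hεG hεH φ hφ hcy
      exact ⟨z, .head (.ver_verA v) hvz, rfl⟩
    | ver_verB =>
      obtain ⟨z, hvz, rfl⟩ := exists_posMap_eq_of_verB_le hεG hεH φ hφ hcy
      exact ⟨z, .head (.ver_verB v) hvz, rfl⟩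
  | verA v => exact exists_posMap_eq_of_verA_le hεG hεH φ hφ hxy
  | verB v => exact exists_posMap_eq_of_verB_le hεG hεH φ hφ hxy
  | edge1 e | edge2 e =>
    rcases eq_of_dartElem_le hxy with rfl | rfl | rfl
    · exact ⟨_, .refl, rfl⟩
    · exact ⟨top1, .single (by constructor), rfl⟩
    · exact ⟨top2, .single (by constructor), rfl⟩
  | top1 | top2 | infA | infB =>
    exact ⟨_, .refl, (isMaxRel_posLe_iff.2 (by simp [posMap]) y hxy).symm⟩

include hεH hφ in
theorem posMap_surjective (hs : Surjective φ) : Surjective (posMap hεG εH φ) := by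
  intro y
  cases y with
  | ver w => obtain ⟨v, rfl⟩ := hs w; exact ⟨ver v, rfl⟩
  | verA w => obtain ⟨v, rfl⟩ := hs w; exact ⟨verA v, rfl⟩
  | verB w => obtain ⟨v, rfl⟩ := hs w; exact ⟨verB v, rfl⟩
  | edge1 f =>
    obtain ⟨v, hv⟩ := hs (εH f).1
    have hle : PosLe H εH (verA (φ v)) (edge1 f) := by rw [hv]; exact .single (.ua_edge1 f)
    obtain ⟨z, -, hz⟩ := exists_posMap_eq_of_verA_le hεG hεH φ hφ hle
    exact ⟨z, hz⟩
  | edge2 f =>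
    obtain ⟨v, hv⟩ := hs (εH f).2
    have hle : PosLe H εH (verA (φ v)) (edge2 f) := by rw [hv]; exact .single (.va_edge2 f)
    obtain ⟨z, -, hz⟩ := exists_posMap_eq_of_verA_le hεG hεH φ hφ hle
    exact ⟨z, hz⟩
  | top1 => exact ⟨top1, rfl⟩
  | top2 => exact ⟨top2, rfl⟩
  | infA => exact ⟨infA, rfl⟩
  | infB => exact ⟨infB, rfl⟩

end Forward

section Backward

variable {VG VH : Type} {G : SimpleGraph VG} {H : SimpleGraph VH}
  {εG : G.edgeSet → VG × VG} {εH : H.edgeSet → VH × VH}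
  {h : PosElem VG G.edgeSet → PosElem VH H.edgeSet}

namespace IsPMorphismRel

variable (hεG : OrientOK G εG) (hεH : OrientOK H εH)
  (hh : IsPMorphismRel (PosLe G εG) (PosLe H εH) h) (hs : Surjective h)
include hh hs

theorem injOn_setOf_isMaxRel_posLe : Set.InjOn h {m | IsMaxRel (PosLe G εG) m} :=
  hh.injOn_setOf_isMaxRel exists_posLe_isMaxRel hs finite_setOf_isMaxRel_posLe
    (by rw [ncard_setOf_isMaxRel_posLe, ncard_setOf_isMaxRel_posLe])

include hεG hεH

theorem level_apply (x : PosElem VG G.edgeSet) : (h x).level = x.level := by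
  rw [← ncard_maxAbove_posLe hεH, ← ncard_maxAbove_posLe hεG,
    hh.ncard_maxAbove_apply exists_posLe_isMaxRel (hh.injOn_setOf_isMaxRel_posLe hs)]

theorem map_infA_eq_infA_or_infB (v : VG) : h infA = infA ∨ h infA = infB := by
  have hmax : IsMaxRel (PosLe H εH) (h infA) := hh.isMaxRel_apply (isMaxRel_posLe_iff.2 (by simp))
  suffices hne : ∀ t, (t = top1 ∨ t = top2) → h infA ≠ t by
    rcases isMaxRel_posLe_iff.1 hmax with h1 | h1 | h1 | h1
    exacts [(hne _ (.inl rfl) h1).elim, (hne _ (.inr rfl) h1).elim, .inl h1, .inr h1]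
  -- Otherwise `h ∞_a` lies above `h v_b`, so it is the image of a maximal element above `v_b`,
  -- which by injectivity on maximal elements is `∞_a`.
  intro t ht hAt
  have hle : PosLe H εH (h (verB v)) (h infA) := by
    obtain ⟨w, hw | hw⟩ :=
      exists_eq_verA_or_verB_of_level_eq_three (hh.level_apply hεG hεH hs (verB v))
    · rw [hw, hAt]; exact verA_le_top hεH w ht
    · rw [hw, hAt]; exact verB_le_top hεH w ht
  have hmem : h infA ∈ maxAbove (PosLe H εH) (h (verB v)) := ⟨hle, hmax⟩
  rw [hh.maxAbove_apply exists_posLe_isMaxRel] at hmem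
  obtain ⟨m, ⟨hvm, hm⟩, hmA⟩ := hmem
  obtain rfl := hh.injOn_setOf_isMaxRel_posLe hs hm (isMaxRel_posLe_iff.2 (by simp)) hmA
  exact hvm.spec

theorem exists_isLocallySurjHom_of_map_inf (hA : h infA = infA) (hB : h infB = infB) :
    ∃ g : VG → VH, Surjective g ∧ IsLocallySurjHom G H g := by
  have hlevel := hh.level_apply hεG hεH hs
  choose g hg using fun v => exists_eq_ver_of_level_eq_four (hlevel (ver v))
  have hgA : ∀ v, h (verA v) = verA (g v) := fun v => by
    obtain ⟨w, hw | hw⟩ := exists_eq_verA_or_verB_of_level_eq_three (hlevel (verA v))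
    · have hvw := (hh.1 _ _ (.single (.ver_verA v))).spec
      rw [hg, hw] at hvw
      rw [hw, hvw]
    · have hwA := (hh.1 _ _ (.single (.verA_infA v))).spec
      rw [hw, hA] at hwA
      exact hwA.elim
  have hgB : ∀ v, h (verB v) = verB (g v) := fun v => by
    obtain ⟨w, hw | hw⟩ := exists_eq_verA_or_verB_of_level_eq_three (hlevel (verB v))
    · have hwB := (hh.1 _ _ (.single (.verB_infB v))).spec
      rw [hw, hB] at hwB
      exact hwB.elim
    · have hvw := (hh.1 _ _ (.single (.ver_verB v))).spec
      rw [hg, hw] at hvw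
      rw [hw, hvw]
  refine ⟨g, fun w => ?_, fun u v huv => ?_, fun u w huw => ?_⟩
  · obtain ⟨x, hx⟩ := hs (ver w)
    obtain ⟨v, rfl⟩ := exists_eq_ver_of_level_eq_four ((hlevel x).symm.trans (by rw [hx]; rfl))
    exact ⟨v, ver.inj ((hg v).symm.trans hx)⟩
  · let d : G.Dart := ⟨(u, v), huv⟩
    obtain ⟨d', hd'⟩ :=
      exists_dartElem_eq_of_level_eq_two hεH ((hlevel _).trans (level_dartElem d))
    have hu := hh.1 _ _ (verA_le_dartElem hεG d)
    have hv := hh.1 _ _ (verB_le_dartElem hεG d)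
    rw [hgA, ← hd'] at hu
    rw [hgB, ← hd'] at hv
    rw [eq_fst_of_verA_le_dartElem hεH hu, eq_snd_of_verB_le_dartElem hεH hv]
    exact d'.adj
  · let d' : H.Dart := ⟨(g u, w), huw⟩
    have hle : PosLe H εH (h (verA u)) (dartElem εH d') := hgA u ▸ verA_le_dartElem hεH d'
    obtain ⟨z, huz, hz⟩ := hh.2 _ _ hle
    obtain ⟨d, rfl⟩ :=
      exists_dartElem_eq_of_level_eq_two hεG ((hlevel z).symm.trans (hz ▸ level_dartElem d'))
    obtain rfl := eq_fst_of_verA_le_dartElem hεG huz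
    refine ⟨d.snd, d.adj, ?_⟩
    have hv := hh.1 _ _ (verB_le_dartElem hεG d)
    rw [hgB, hz] at hv
    exact eq_snd_of_verB_le_dartElem hεH hv

theorem exists_isLocallySurjHom [Nonempty VH] :
    ∃ g : VG → VH, Surjective g ∧ IsLocallySurjHom G H g := by
  obtain ⟨w⟩ := ‹Nonempty VH›
  obtain ⟨x, hx⟩ := hs (ver w)
  obtain ⟨v, -⟩ := exists_eq_ver_of_level_eq_four
    ((hh.level_apply hεG hεH hs x).symm.trans (by rw [hx]; rfl))
  have hswap : IsPMorphismRel (PosLe G εG) (PosLe H εH) (h ∘ swap) :=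
    hh.comp (of_involutive swap_involutive fun _ _ => PosLe.swap)
  have hs' : Surjective (h ∘ swap) := hs.comp swap_involutive.surjective
  have hAB : h infA ≠ h infB := fun heq => nomatch hh.injOn_setOf_isMaxRel_posLe hs
    (isMaxRel_posLe_iff.2 (by simp)) (isMaxRel_posLe_iff.2 (by simp)) heq
  -- `h ∘ swap` is again a surjective p-morphism, and one of `h`, `h ∘ swap` fixes `∞_a` and `∞_b`.
  rcases hh.map_infA_eq_infA_or_infB hεG hεH hs v with hA | hA <;>
    rcases hswap.map_infA_eq_infA_or_infB hεG hεH hs' v with hB | hB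
  · exact (hAB (hA.trans hB.symm)).elim
  · exact hh.exists_isLocallySurjHom_of_map_inf hεG hεH hs hA hB
  · exact hswap.exists_isLocallySurjHom_of_map_inf hεG hεH hs' hB hA
  · exact (hAB (hA.trans hB.symm)).elim

end IsPMorphismRel

end Backward

theorem lsh_iff_pMorphism_general {VG VH : Type} [Nonempty VH]
    (G : SimpleGraph VG) (H : SimpleGraph VH)
    (εG : ↥G.edgeSet → VG × VG) (hεG : OrientOK G εG)
    (εH : ↥H.edgeSet → VH × VH) (hεH : OrientOK H εH) :
    (∃ g : VG → VH, Function.Surjective g ∧ IsLocallySurjHom G H g) ↔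
    (∃ h : PosElem VG ↥G.edgeSet → PosElem VH ↥H.edgeSet,
      Function.Surjective h ∧ IsPMorphismRel (PosLe G εG) (PosLe H εH) h) := by
  constructor
  · rintro ⟨g, hgs, hg, hgl⟩
    let φ : G →g H := ⟨g, hg _ _⟩
    exact ⟨posMap hεG εH φ, posMap_surjective hεG hεH φ hgl hgs,
      posMap_isPMorphismRel hεG hεH φ hgl⟩
  · rintro ⟨h, hs, hh⟩
    exact hh.exists_isLocallySurjHom hεG hεH hs

theorem lsh_iff_pMorphism {VG VH : Type} [Fintype VG] [Fintype VH] [Nonempty VH]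
    (G : SimpleGraph VG) (H : SimpleGraph VH)
    (εG : ↥G.edgeSet → VG × VG) (hεG : OrientOK G εG)
    (εH : ↥H.edgeSet → VH × VH) (hεH : OrientOK H εH) :
    (∃ g : VG → VH, Function.Surjective g ∧ IsLocallySurjHom G H g) ↔
    (∃ h : PosElem VG ↥G.edgeSet → PosElem VH ↥H.edgeSet,
      Function.Surjective h ∧ IsPMorphismRel (PosLe G εG) (PosLe H εH) h) :=
  lsh_iff_pMorphism_general G H εG hεG εH hεH
end

section
/- Let G and H be finite simple graphs such that H has at least one vertex. Then there exists a surjective locally surjective homomorphism from G onto H if and only if there exists a surjective p-morphism from Pos_⊥(G) onto Pos_⊥(H). -/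
/-- The order of the rooted poset `Pos⊥(G)`: `Pos(G)` with a new minimum element
`⊥` (represented by `none`) adjoined. -/
def PosBotLe {V : Type} (G : SimpleGraph V) (ε : ↥G.edgeSet → V × V) :
    Option (PosElem V ↥G.edgeSet) → Option (PosElem V ↥G.edgeSet) → Prop
  | none, _ => True
  | some _, none => False
  | some x, some y => PosLe G ε x y

/-!
A surjective locally surjective homomorphism `g` induces a map `Pos(G) → Pos(H)`: apply `g` to
the three copies of each vertex, `Sym2.map g` to edges, and send each copy of an edge to the copy
of its image lying above the image of the same endpoint. Monotonicity is immediate, and local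
surjectivity is exactly what lifts a relation `g(v)_a ≤ f_i` back to some `v_a ≤ e_j`.

Conversely, a p-morphism `h` maps the set of maximal elements above `x` onto the set of maximal
elements above `h x`. Both posets have exactly four maximal elements, `⊤₁, ⊤₂, ∞_a, ∞_b`, so `h`
is injective on them and preserves the number of maximal elements above each point. That number
is 4 on `⊥` and the vertices, 3 on `V_a ∪ V_b` and 2 on the edge copies, so `h` restricts to a
surjective vertex map `g`. Since `u_a` and `w_b` have different sets of maximal elements above
them, `h` either preserves both sides `V_a`, `V_b` or swaps them; hence a copy of the edge `uv`
is sent to a copy of `g(u)g(v)`, and `g` is a locally surjective homomorphism.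
-/

section RelMaximal

variable {α β : Type} {r : α → α → Prop} {s : β → β → Prop} {h : α → β}

def RelMaximal (r : α → α → Prop) (m : α) : Prop :=
  ∀ y, r m y → y = m

def maximaAbove (r : α → α → Prop) (x : α) : Set α :=
  {m | RelMaximal r m ∧ r x m}

theorem IsPMorphismRel.relMaximal_map (hh : IsPMorphismRel r s h) {m : α}
    (hm : RelMaximal r m) : RelMaximal s (h m) := by
  intro y hy
  obtain ⟨z, hmz, rfl⟩ := hh.2 m y hy
  rw [hm z hmz]

theorem IsPMorphismRel.maximaAbove_map [IsTrans α r] (hh : IsPMorphismRel r s h)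
    (hex : ∀ x, (maximaAbove r x).Nonempty) (x : α) :
    maximaAbove s (h x) = h '' maximaAbove r x := by
  ext m'
  constructor
  · rintro ⟨hm', hxm'⟩
    obtain ⟨z, hxz, rfl⟩ := hh.2 x m' hxm'
    obtain ⟨m, hm, hzm⟩ := hex z
    exact ⟨m, ⟨hm, _root_.trans hxz hzm⟩, hm' (h m) (hh.1 z m hzm)⟩
  · rintro ⟨m, ⟨hm, hxm⟩, rfl⟩
    exact ⟨hh.relMaximal_map hm, hh.1 x m hxm⟩

end RelMaximal

namespace PosElem

variable {V E : Type} {K : SimpleGraph V} {ε : ↥K.edgeSet → V × V}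

def LeExplicit (ε : ↥K.edgeSet → V × V) : PosElem V ↥K.edgeSet → PosElem V ↥K.edgeSet → Prop
  | .ver v, .ver w | .ver v, .verA w | .ver v, .verB w => v = w
  | .ver v, .edge1 f | .ver v, .edge2 f => v = (ε f).1 ∨ v = (ε f).2
  | .ver _, _ => True
  | .verA v, .verA w => v = w
  | .verA v, .edge1 f => v = (ε f).1
  | .verA v, .edge2 f => v = (ε f).2
  | .verA _, .top1 | .verA _, .top2 | .verA _, .infA => True
  | .verB v, .verB w => v = w
  | .verB v, .edge1 f => v = (ε f).2
  | .verB v, .edge2 f => v = (ε f).1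
  | .verB _, .top1 | .verB _, .top2 | .verB _, .infB => True
  | .edge1 e, .edge1 f | .edge2 e, .edge2 f => e = f
  | .edge1 _, .top1 | .edge1 _, .top2 | .edge2 _, .top1 | .edge2 _, .top2 => True
  | .top1, .top1 | .top2, .top2 | .infA, .infA | .infB, .infB => True
  | _, _ => False

theorem leExplicit_of_posLe {x y : PosElem V ↥K.edgeSet} (h : PosLe K ε x y) :
    LeExplicit ε x y := by
  induction h using Relation.ReflTransGen.head_induction_on with
  | refl => cases y <;> simp [LeExplicit]
  | head hcov _ ih => cases hcov <;> cases y <;> simp_all [LeExplicit]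

theorem adj_of_orientOK (hε : OrientOK K ε) (f : ↥K.edgeSet) : K.Adj (ε f).1 (ε f).2 := by
  rw [← SimpleGraph.mem_edgeSet, ← hε f]
  exact f.2

theorem mem_edge_iff (hε : OrientOK K ε) {f : ↥K.edgeSet} {p : V} :
    p ∈ (f : Sym2 V) ↔ p = (ε f).1 ∨ p = (ε f).2 := by
  rw [hε f, Sym2.mem_iff]

open Classical in
/-- The copy of the edge `f` lying above `p_a`, for an endpoint `p` of `f`. -/
noncomputable def edgeAbove (ε : ↥K.edgeSet → V × V) (f : ↥K.edgeSet) (p : V) :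
    PosElem V ↥K.edgeSet :=
  if (ε f).1 = p then .edge1 f else .edge2 f

theorem edgeAbove_fst (f : ↥K.edgeSet) : edgeAbove ε f (ε f).1 = .edge1 f := by
  simp [edgeAbove]

theorem edgeAbove_snd (hε : OrientOK K ε) (f : ↥K.edgeSet) :
    edgeAbove ε f (ε f).2 = .edge2 f := by
  simp [edgeAbove, (adj_of_orientOK hε f).ne]

theorem edgeAbove_le_top (f : ↥K.edgeSet) (p : V) {t : PosElem V ↥K.edgeSet}
    (ht : t = .top1 ∨ t = .top2) : PosLe K ε (edgeAbove ε f p) t := by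
  unfold edgeAbove
  split_ifs <;> rcases ht with rfl | rfl <;> exact .single (by constructor)

theorem verA_le_edgeAbove (hε : OrientOK K ε) {f : ↥K.edgeSet} {p : V}
    (hp : p ∈ (f : Sym2 V)) : PosLe K ε (.verA p) (edgeAbove ε f p) := by
  rcases (mem_edge_iff hε).1 hp with rfl | rfl
  · rw [edgeAbove_fst]
    exact .single (.ua_edge1 f)
  · rw [edgeAbove_snd hε]
    exact .single (.va_edge2 f)

theorem verB_le_edgeAbove (hε : OrientOK K ε) {f : ↥K.edgeSet} {p q : V}
    (hf : (f : Sym2 V) = s(p, q)) : PosLe K ε (.verB q) (edgeAbove ε f p) := by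
  have hpq := hε f
  rw [hf, Sym2.eq_iff] at hpq
  rcases hpq with ⟨rfl, rfl⟩ | ⟨rfl, rfl⟩
  · rw [edgeAbove_fst]
    exact .single (.vb_edge1 f)
  · rw [edgeAbove_snd hε]
    exact .single (.ub_edge2 f)

theorem verA_le_top (hε : OrientOK K ε) (v : V) {t : PosElem V ↥K.edgeSet}
    (ht : t = .top1 ∨ t = .top2) : PosLe K ε (.verA v) t := by
  by_cases hv : ∀ w, ¬ K.Adj v w
  · rcases ht with rfl | rfl
    exacts [.single (.isolA_top1 v hv), .single (.isolA_top2 v hv)]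
  · push Not at hv
    obtain ⟨w, hvw⟩ := hv
    exact (verA_le_edgeAbove hε (f := ⟨s(v, w), hvw⟩) (Sym2.mem_mk_left v w)).trans
      (edgeAbove_le_top _ v ht)

theorem verB_le_top (hε : OrientOK K ε) (v : V) {t : PosElem V ↥K.edgeSet}
    (ht : t = .top1 ∨ t = .top2) : PosLe K ε (.verB v) t := by
  by_cases hv : ∀ w, ¬ K.Adj v w
  · rcases ht with rfl | rfl
    exacts [.single (.isolB_top1 v hv), .single (.isolB_top2 v hv)]
  · push Not at hv
    obtain ⟨w, hvw⟩ := hv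
    exact (verB_le_edgeAbove hε (f := ⟨s(w, v), hvw.symm⟩) rfl).trans
      (edgeAbove_le_top _ w ht)

theorem leExplicit_ver {v : V} {y : PosElem V ↥K.edgeSet} (h : LeExplicit ε (.ver v) y) :
    y = .ver v ∨ LeExplicit ε (.verA v) y ∨ LeExplicit ε (.verB v) y := by
  cases y <;> simp only [LeExplicit] at h ⊢ <;> simp [h, or_comm]

theorem posLe_of_leExplicit (hε : OrientOK K ε) {x y : PosElem V ↥K.edgeSet}
    (h : LeExplicit ε x y) : PosLe K ε x y := by
  have above_A : ∀ {v y}, LeExplicit ε (.verA v) y → PosLe K ε (.verA v) y := by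
    intro v y h
    cases y <;> simp only [LeExplicit] at h
    all_goals first
      | exact verA_le_top hε v (.inl rfl)
      | exact verA_le_top hε v (.inr rfl)
      | exact .single (.verA_infA v)
      | (subst h; first | exact .refl | exact .single (.ua_edge1 _) | exact .single (.va_edge2 _))
  have above_B : ∀ {v y}, LeExplicit ε (.verB v) y → PosLe K ε (.verB v) y := by
    intro v y h
    cases y <;> simp only [LeExplicit] at h
    all_goals first
      | exact verB_le_top hε v (.inl rfl)
      | exact verB_le_top hε v (.inr rfl)
      | exact .single (.verB_infB v)
      | (subst h; first | exact .refl | exact .single (.vb_edge1 _) | exact .single (.ub_edge2 _))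
  cases x with
  | ver v =>
    rcases leExplicit_ver h with rfl | h | h
    exacts [.refl, .head (.ver_verA v) (above_A h), .head (.ver_verB v) (above_B h)]
  | verA v => exact above_A h
  | verB v => exact above_B h
  | _ =>
    cases y <;> simp only [LeExplicit] at h
    all_goals first
      | exact h.elim
      | (subst h; exact .refl)
      | exact .refl
      | exact .single (by constructor)

theorem posLe_iff (hε : OrientOK K ε) {x y : PosElem V ↥K.edgeSet} :
    PosLe K ε x y ↔ LeExplicit ε x y :=
  ⟨leExplicit_of_posLe, posLe_of_leExplicit hε⟩

theorem edgeAbove_cases (hε : OrientOK K ε) {f : ↥K.edgeSet} {p : V} (hp : p ∈ (f : Sym2 V)) :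
    (p = (ε f).1 ∧ edgeAbove ε f p = .edge1 f) ∨ (p = (ε f).2 ∧ edgeAbove ε f p = .edge2 f) := by
  rcases (mem_edge_iff hε).1 hp with rfl | rfl
  exacts [.inl ⟨rfl, edgeAbove_fst f⟩, .inr ⟨rfl, edgeAbove_snd hε f⟩]

theorem eq_of_verA_le_edgeAbove (hε : OrientOK K ε) {f : ↥K.edgeSet} {p q : V}
    (hp : p ∈ (f : Sym2 V)) (h : PosLe K ε (.verA q) (edgeAbove ε f p)) : q = p := by
  rcases edgeAbove_cases hε hp with ⟨rfl, he⟩ | ⟨rfl, he⟩ <;> rw [he] at h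
  all_goals exact leExplicit_of_posLe h

theorem eq_of_verB_le_edgeAbove (hε : OrientOK K ε) {f : ↥K.edgeSet} {p q : V}
    (hp : p ∈ (f : Sym2 V)) (h : PosLe K ε (.verB q) (edgeAbove ε f p)) :
    (f : Sym2 V) = s(p, q) := by
  rcases edgeAbove_cases hε hp with ⟨rfl, he⟩ | ⟨rfl, he⟩ <;> rw [he] at h
  · rw [hε f, show q = (ε f).2 from leExplicit_of_posLe h]
  · rw [hε f, show q = (ε f).1 from leExplicit_of_posLe h, Sym2.eq_swap]

theorem mem_of_ver_le_edgeAbove (hε : OrientOK K ε) {f : ↥K.edgeSet} {p q : V}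
    (hp : p ∈ (f : Sym2 V)) (h : PosLe K ε (.ver q) (edgeAbove ε f p)) : q ∈ (f : Sym2 V) := by
  rw [mem_edge_iff hε]
  rcases edgeAbove_cases hε hp with ⟨-, he⟩ | ⟨-, he⟩ <;> rw [he] at h
  all_goals exact leExplicit_of_posLe h

theorem ver_le_edgeAbove (hε : OrientOK K ε) {f : ↥K.edgeSet} {p : V}
    (hp : p ∈ (f : Sym2 V)) : PosLe K ε (.ver p) (edgeAbove ε f p) :=
  .head (.ver_verA p) (verA_le_edgeAbove hε hp)

theorem exists_edgeAbove_eq (hε : OrientOK K ε) (f : ↥K.edgeSet) {x : PosElem V ↥K.edgeSet}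
    (hx : x = .edge1 f ∨ x = .edge2 f) : ∃ p q, (f : Sym2 V) = s(p, q) ∧ x = edgeAbove ε f p := by
  rcases hx with rfl | rfl
  exacts [⟨_, _, hε f, (edgeAbove_fst f).symm⟩,
    ⟨_, _, (hε f).trans Sym2.eq_swap, (edgeAbove_snd hε f).symm⟩]

theorem eq_or_exists_of_verA_le (hε : OrientOK K ε) {q : V} {y : PosElem V ↥K.edgeSet}
    (h : PosLe K ε (.verA q) y) :
    y = .verA q ∨ y = .top1 ∨ y = .top2 ∨ y = .infA ∨
      ∃ f : ↥K.edgeSet, ∃ p, (f : Sym2 V) = s(q, p) ∧ y = edgeAbove ε f q := by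
  replace h := leExplicit_of_posLe h
  cases y <;> simp only [LeExplicit] at h
  case edge1 f =>
    exact .inr <| .inr <| .inr <| .inr ⟨f, (ε f).2, by rw [hε f, h], by rw [h, edgeAbove_fst]⟩
  case edge2 f =>
    refine .inr <| .inr <| .inr <| .inr ⟨f, (ε f).1, ?_, by rw [h, edgeAbove_snd hε]⟩
    rw [hε f, h, Sym2.eq_swap]
  all_goals first | exact h.elim | (subst h; simp) | simp

theorem eq_or_exists_of_verB_le (hε : OrientOK K ε) {q : V} {y : PosElem V ↥K.edgeSet}
    (h : PosLe K ε (.verB q) y) :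
    y = .verB q ∨ y = .top1 ∨ y = .top2 ∨ y = .infB ∨
      ∃ f : ↥K.edgeSet, ∃ p, (f : Sym2 V) = s(p, q) ∧ y = edgeAbove ε f p := by
  replace h := leExplicit_of_posLe h
  cases y <;> simp only [LeExplicit] at h
  case edge1 f =>
    exact .inr <| .inr <| .inr <| .inr ⟨f, (ε f).1, by rw [hε f, h], (edgeAbove_fst f).symm⟩
  case edge2 f =>
    refine .inr <| .inr <| .inr <| .inr ⟨f, (ε f).2, ?_, (edgeAbove_snd hε f).symm⟩
    rw [hε f, h, Sym2.eq_swap]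
  all_goals first | exact h.elim | (subst h; simp) | simp

theorem eq_or_verA_le_or_verB_le_of_ver_le (hε : OrientOK K ε) {q : V}
    {y : PosElem V ↥K.edgeSet} (h : PosLe K ε (.ver q) y) :
    y = .ver q ∨ PosLe K ε (.verA q) y ∨ PosLe K ε (.verB q) y := by
  rcases leExplicit_ver (leExplicit_of_posLe h) with h | h | h
  exacts [.inl h, .inr (.inl (posLe_of_leExplicit hε h)), .inr (.inr (posLe_of_leExplicit hε h))]

theorem eq_or_eq_top_of_edgeAbove_le (hε : OrientOK K ε) {f : ↥K.edgeSet} {p : V}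
    (hp : p ∈ (f : Sym2 V)) {y : PosElem V ↥K.edgeSet} (h : PosLe K ε (edgeAbove ε f p) y) :
    y = edgeAbove ε f p ∨ y = .top1 ∨ y = .top2 := by
  rcases edgeAbove_cases hε hp with ⟨-, he⟩ | ⟨-, he⟩ <;> rw [he] at h ⊢ <;>
    replace h := leExplicit_of_posLe h <;> cases y <;> simp only [LeExplicit] at h <;>
    first | exact h.elim | (subst h; simp) | simp

instance : IsTrans _ (PosBotLe K ε) where
  trans
    | none, _, _, _, _ => trivial
    | some _, some _, some _, hxy, hyz => Relation.ReflTransGen.trans hxy hyz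

/-- The maximal elements `⊤₁, ⊤₂, ∞_a, ∞_b` above `x` in `Pos⊥`; see `maximaAbove_posBotLe`. -/
def apexesAbove : Option (PosElem V E) → Set (Option (PosElem V E))
  | none | some (.ver _) => {some .top1, some .top2, some .infA, some .infB}
  | some (.verA _) => {some .top1, some .top2, some .infA}
  | some (.verB _) => {some .top1, some .top2, some .infB}
  | some (.edge1 _) | some (.edge2 _) => {some .top1, some .top2}
  | x => {x}

theorem relMaximal_iff_mem_apexesAbove_none (hε : OrientOK K ε)
    (m : Option (PosElem V ↥K.edgeSet)) :
    RelMaximal (PosBotLe K ε) m ↔ m ∈ apexesAbove none := by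
  constructor
  · intro hm
    rcases m with _ | ⟨v | v | v | e | e | _ | _ | _ | _⟩
    · exact absurd (hm (some .top1) trivial) (by simp)
    · exact absurd (hm (some (.verA v)) (.single (.ver_verA v))) (by simp)
    · exact absurd (hm (some .infA) (.single (.verA_infA v))) (by simp)
    · exact absurd (hm (some .infB) (.single (.verB_infB v))) (by simp)
    · exact absurd (hm (some .top1) (.single (.edge1_top1 e))) (by simp)
    · exact absurd (hm (some .top1) (.single (.edge2_top1 e))) (by simp)
    all_goals simp [apexesAbove]
  · intro hm y hy
    simp only [apexesAbove, Set.mem_insert_iff, Set.mem_singleton_iff] at hm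
    rcases hm with rfl | rfl | rfl | rfl <;>
      rcases y with _ | ⟨_ | _ | _ | _ | _ | _ | _ | _ | _⟩ <;>
      simp_all [PosBotLe, posLe_iff hε, LeExplicit]

theorem maximaAbove_posBotLe (hε : OrientOK K ε) (x : Option (PosElem V ↥K.edgeSet)) :
    maximaAbove (PosBotLe K ε) x = apexesAbove x := by
  ext m
  rw [maximaAbove, Set.mem_ofPred_eq, relMaximal_iff_mem_apexesAbove_none hε]
  rcases m with _ | ⟨_ | _ | _ | _ | _ | _ | _ | _ | _⟩ <;>
    rcases x with _ | ⟨_ | _ | _ | _ | _ | _ | _ | _ | _⟩ <;>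
    simp [apexesAbove, PosBotLe, posLe_iff hε, LeExplicit]

theorem ncard_apexesAbove_none : (apexesAbove (none : Option (PosElem V E))).ncard = 4 := by
  simp [apexesAbove]

theorem apexesAbove_subset_none (x : Option (PosElem V E)) :
    apexesAbove x ⊆ apexesAbove none := by
  rcases x with _ | ⟨_ | _ | _ | _ | _ | _ | _ | _ | _⟩ <;> simp [apexesAbove, Set.subset_def]

theorem apexesAbove_nonempty (x : Option (PosElem V E)) : (apexesAbove x).Nonempty := by
  rcases x with _ | ⟨_ | _ | _ | _ | _ | _ | _ | _ | _⟩ <;> simp [apexesAbove]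

theorem apexesAbove_verA_ne_verB (p q : V) :
    apexesAbove (some (.verA p : PosElem V E)) ≠ apexesAbove (some (.verB q)) := by
  intro h
  have hA : some (.infA : PosElem V E) ∈ apexesAbove (some (.verA p)) := by simp [apexesAbove]
  rw [h] at hA
  simp [apexesAbove] at hA

theorem eq_none_or_ver_of_ncard_eq_four {x : Option (PosElem V E)}
    (h : (apexesAbove x).ncard = 4) : x = none ∨ ∃ v, x = some (.ver v) := by
  rcases x with _ | ⟨_ | _ | _ | _ | _ | _ | _ | _ | _⟩ <;> simp [apexesAbove] at h ⊢

theorem eq_verA_or_verB_of_ncard_eq_three {x : Option (PosElem V E)}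
    (h : (apexesAbove x).ncard = 3) : ∃ p, x = some (.verA p) ∨ x = some (.verB p) := by
  rcases x with _ | ⟨_ | _ | _ | _ | _ | _ | _ | _ | _⟩ <;> simp [apexesAbove] at h ⊢

theorem ncard_apexesAbove_edgeAbove (f : ↥K.edgeSet) (p : V) :
    (apexesAbove (some (edgeAbove ε f p))).ncard = 2 := by
  unfold edgeAbove
  split_ifs <;> simp [apexesAbove]

theorem exists_edgeAbove_of_ncard_eq_two (hε : OrientOK K ε) {x : Option (PosElem V ↥K.edgeSet)}
    (h : (apexesAbove x).ncard = 2) :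
    ∃ (f : ↥K.edgeSet) (p : V), p ∈ (f : Sym2 V) ∧ x = some (edgeAbove ε f p) := by
  rcases x with _ | ⟨_ | _ | _ | f | f | _ | _ | _ | _⟩ <;> simp [apexesAbove] at h
  · obtain ⟨p, q, hf, he⟩ := exists_edgeAbove_eq hε f (.inl rfl)
    exact ⟨f, p, hf ▸ Sym2.mem_mk_left p q, he ▸ rfl⟩
  · obtain ⟨p, q, hf, he⟩ := exists_edgeAbove_eq hε f (.inr rfl)
    exact ⟨f, p, hf ▸ Sym2.mem_mk_left p q, he ▸ rfl⟩

end PosElem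

namespace IsPMorphismRel

open PosElem

variable {VG VH : Type} {G : SimpleGraph VG} {H : SimpleGraph VH}
  {εG : ↥G.edgeSet → VG × VG} {εH : ↥H.edgeSet → VH × VH}
  {h : Option (PosElem VG ↥G.edgeSet) → Option (PosElem VH ↥H.edgeSet)}

theorem map_none (hh : IsPMorphismRel (PosBotLe G εG) (PosBotLe H εH) h)
    (hsurj : Function.Surjective h) : h none = none := by
  obtain ⟨z, hz⟩ := hsurj none
  have hle := hh.1 none z trivial
  rw [hz] at hle
  cases hn : h none
  · rfl
  · rw [hn] at hle
    exact hle.elim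

theorem apexesAbove_map (hεG : OrientOK G εG) (hεH : OrientOK H εH)
    (hh : IsPMorphismRel (PosBotLe G εG) (PosBotLe H εH) h) (x : Option (PosElem VG ↥G.edgeSet)) :
    apexesAbove (h x) = h '' apexesAbove x := by
  rw [← maximaAbove_posBotLe hεG, ← maximaAbove_posBotLe hεH]
  exact hh.maximaAbove_map (fun y => maximaAbove_posBotLe hεG y ▸ apexesAbove_nonempty y) x

theorem injOn_apexesAbove_none (hεG : OrientOK G εG) (hεH : OrientOK H εH)
    (hh : IsPMorphismRel (PosBotLe G εG) (PosBotLe H εH) h) (hsurj : Function.Surjective h) :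
    Set.InjOn h (apexesAbove none) := by
  have himage : h '' apexesAbove none = apexesAbove none := by
    rw [← apexesAbove_map hεG hεH hh, map_none hh hsurj]
  refine Set.injOn_of_ncard_image_eq ?_ (Set.finite_of_ncard_ne_zero ?_) <;>
    simp only [himage, ncard_apexesAbove_none, ne_eq, OfNat.ofNat_ne_zero, not_false_eq_true]

theorem ncard_apexesAbove_map (hεG : OrientOK G εG) (hεH : OrientOK H εH)
    (hh : IsPMorphismRel (PosBotLe G εG) (PosBotLe H εH) h) (hsurj : Function.Surjective h)
    (x : Option (PosElem VG ↥G.edgeSet)) :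
    (apexesAbove (h x)).ncard = (apexesAbove x).ncard := by
  rw [apexesAbove_map hεG hεH hh,
    ((injOn_apexesAbove_none hεG hεH hh hsurj).mono (apexesAbove_subset_none x)).ncard_image]

theorem apexesAbove_eq_of_map (hεG : OrientOK G εG) (hεH : OrientOK H εH)
    (hh : IsPMorphismRel (PosBotLe G εG) (PosBotLe H εH) h) (hsurj : Function.Surjective h)
    {x y : Option (PosElem VG ↥G.edgeSet)} (hxy : apexesAbove (h x) = apexesAbove (h y)) :
    apexesAbove x = apexesAbove y := by
  rw [apexesAbove_map hεG hεH hh, apexesAbove_map hεG hεH hh] at hxy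
  exact ((injOn_apexesAbove_none hεG hεH hh hsurj).image_eq_image_iff
    (apexesAbove_subset_none x) (apexesAbove_subset_none y)).1 hxy

theorem exists_eq_ver_of_map_eq_ver (hεG : OrientOK G εG) (hεH : OrientOK H εH)
    (hh : IsPMorphismRel (PosBotLe G εG) (PosBotLe H εH) h) (hsurj : Function.Surjective h)
    {x : Option (PosElem VG ↥G.edgeSet)} {p : VH} (hx : h x = some (.ver p)) :
    ∃ v, x = some (.ver v) := by
  have h4 : (apexesAbove x).ncard = 4 := by
    rw [← ncard_apexesAbove_map hεG hεH hh hsurj, hx]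
    simp [apexesAbove]
  rcases eq_none_or_ver_of_ncard_eq_four h4 with rfl | hv
  · rw [map_none hh hsurj] at hx
    cases hx
  · exact hv

theorem exists_map_ver_eq (hεG : OrientOK G εG) (hεH : OrientOK H εH)
    (hh : IsPMorphismRel (PosBotLe G εG) (PosBotLe H εH) h) (hsurj : Function.Surjective h)
    (v : VG) : ∃ p, h (some (.ver v)) = some (.ver p) := by
  have h4 : (apexesAbove (h (some (.ver v)))).ncard = 4 := by
    rw [ncard_apexesAbove_map hεG hεH hh hsurj]
    simp [apexesAbove]
  refine (eq_none_or_ver_of_ncard_eq_four h4).resolve_left fun hn => ?_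
  -- `h (v_a)` provides a vertex `p` of `H`; lifting `⊥ ≤ p` along `h` can only return `v` itself.
  obtain ⟨p, -⟩ := eq_verA_or_verB_of_ncard_eq_three (x := h (some (.verA v))) (by
    rw [ncard_apexesAbove_map hεG hεH hh hsurj]
    simp [apexesAbove])
  obtain ⟨z, hvz, hz⟩ := hh.2 (some (.ver v)) (some (.ver p)) (by rw [hn]; trivial)
  obtain ⟨w, rfl⟩ := exists_eq_ver_of_map_eq_ver hεG hεH hh hsurj hz
  obtain rfl : v = w := leExplicit_of_posLe hvz
  rw [hn] at hz
  cases hz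

variable {g : VG → VH}

theorem surjective_of_map_ver (hεG : OrientOK G εG) (hεH : OrientOK H εH)
    (hh : IsPMorphismRel (PosBotLe G εG) (PosBotLe H εH) h) (hsurj : Function.Surjective h)
    (hg : ∀ v, h (some (.ver v)) = some (.ver (g v))) : Function.Surjective g := by
  intro p
  obtain ⟨x, hx⟩ := hsurj (some (.ver p))
  obtain ⟨v, rfl⟩ := exists_eq_ver_of_map_eq_ver hεG hεH hh hsurj hx
  rw [hg v] at hx
  exact ⟨v, by injections⟩

theorem map_verA_or_verB (hεG : OrientOK G εG) (hεH : OrientOK H εH)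
    (hh : IsPMorphismRel (PosBotLe G εG) (PosBotLe H εH) h) (hsurj : Function.Surjective h)
    (hg : ∀ v, h (some (.ver v)) = some (.ver (g v))) {v : VG} {x : PosElem VG ↥G.edgeSet}
    (hx : x = .verA v ∨ x = .verB v) :
    h (some x) = some (.verA (g v)) ∨ h (some x) = some (.verB (g v)) := by
  have h3 : (apexesAbove (h (some x))).ncard = 3 := by
    rw [ncard_apexesAbove_map hεG hεH hh hsurj]
    rcases hx with rfl | rfl <;> simp [apexesAbove]
  have hle := hh.1 (some (.ver v)) (some x) (by
    rcases hx with rfl | rfl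
    exacts [.single (.ver_verA v), .single (.ver_verB v)])
  rw [hg v] at hle
  obtain ⟨p, hp | hp⟩ := eq_verA_or_verB_of_ncard_eq_three h3 <;> rw [hp] at hle ⊢
  · exact .inl (congrArg _ (congrArg _ (leExplicit_of_posLe hle : g v = p).symm))
  · exact .inr (congrArg _ (congrArg _ (leExplicit_of_posLe hle : g v = p).symm))

theorem map_verA_verB (hεG : OrientOK G εG) (hεH : OrientOK H εH)
    (hh : IsPMorphismRel (PosBotLe G εG) (PosBotLe H εH) h) (hsurj : Function.Surjective h)
    (hg : ∀ v, h (some (.ver v)) = some (.ver (g v))) (u w : VG) :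
    (h (some (.verA u)) = some (.verA (g u)) ∧ h (some (.verB w)) = some (.verB (g w))) ∨
      (h (some (.verA u)) = some (.verB (g u)) ∧ h (some (.verB w)) = some (.verA (g w))) := by
  have hne := mt (apexesAbove_eq_of_map hεG hεH hh hsurj) (apexesAbove_verA_ne_verB u w)
  rcases map_verA_or_verB hεG hεH hh hsurj hg (.inl rfl) with hA | hA <;>
    rcases map_verA_or_verB hεG hεH hh hsurj hg (.inr rfl) with hB | hB
  · exact absurd (by rw [hA, hB]; rfl) hne
  · exact .inl ⟨hA, hB⟩
  · exact .inr ⟨hA, hB⟩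
  · exact absurd (by rw [hA, hB]; rfl) hne

theorem coe_eq_map_of_map_edgeAbove (hεG : OrientOK G εG) (hεH : OrientOK H εH)
    (hh : IsPMorphismRel (PosBotLe G εG) (PosBotLe H εH) h) (hsurj : Function.Surjective h)
    (hg : ∀ v, h (some (.ver v)) = some (.ver (g v))) {e : ↥G.edgeSet} {a : VG}
    (ha : a ∈ (e : Sym2 VG)) {f : ↥H.edgeSet} {p : VH} (hp : p ∈ (f : Sym2 VH))
    (he : h (some (edgeAbove εG e a)) = some (edgeAbove εH f p)) :
    (f : Sym2 VH) = Sym2.map g e := by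
  obtain ⟨b, hb⟩ := Sym2.mem_iff_exists.1 ha
  have hA := hh.1 (some _) (some _) (verA_le_edgeAbove hεG ha)
  have hB := hh.1 (some _) (some _) (verB_le_edgeAbove hεG hb)
  rw [he] at hA hB
  rw [hb, Sym2.map_mk]
  rcases map_verA_verB hεG hεH hh hsurj hg a b with ⟨hA', hB'⟩ | ⟨hA', hB'⟩ <;>
    rw [hA'] at hA <;> rw [hB'] at hB
  · rw [eq_of_verB_le_edgeAbove hεH hp hB, eq_of_verA_le_edgeAbove hεH hp hA]
  · rw [eq_of_verB_le_edgeAbove hεH hp hA, eq_of_verA_le_edgeAbove hεH hp hB, Sym2.eq_swap]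

theorem isLocallySurjHom_of_map_ver (hεG : OrientOK G εG) (hεH : OrientOK H εH)
    (hh : IsPMorphismRel (PosBotLe G εG) (PosBotLe H εH) h) (hsurj : Function.Surjective h)
    (hg : ∀ v, h (some (.ver v)) = some (.ver (g v))) : IsLocallySurjHom G H g := by
  refine ⟨fun u v huv => ?_, fun u w huw => ?_⟩
  · let e : ↥G.edgeSet := ⟨s(u, v), huv⟩
    have hu : u ∈ (e : Sym2 VG) := Sym2.mem_mk_left u v
    obtain ⟨f, p, hp, he⟩ := exists_edgeAbove_of_ncard_eq_two hεH (x := h (some (edgeAbove εG e u)))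
      (by rw [ncard_apexesAbove_map hεG hεH hh hsurj, ncard_apexesAbove_edgeAbove])
    have hf := f.2
    rwa [coe_eq_map_of_map_edgeAbove hεG hεH hh hsurj hg hu hp he, Sym2.map_mk] at hf
  · let f : ↥H.edgeSet := ⟨s(g u, w), huw⟩
    have hle : PosBotLe H εH (h (some (.ver u))) (some (edgeAbove εH f (g u))) := by
      rw [hg u]
      exact ver_le_edgeAbove hεH (Sym2.mem_mk_left _ _)
    obtain ⟨z, huz, hz⟩ := hh.2 _ _ hle
    obtain ⟨e, a, ha, rfl⟩ := exists_edgeAbove_of_ncard_eq_two hεG (x := z)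
      (by rw [← ncard_apexesAbove_map hεG hεH hh hsurj, hz, ncard_apexesAbove_edgeAbove])
    obtain ⟨v, hv⟩ := Sym2.mem_iff_exists.1 (mem_of_ver_le_edgeAbove hεG ha huz)
    have hf := coe_eq_map_of_map_edgeAbove hεG hεH hh hsurj hg ha (Sym2.mem_mk_left _ _) hz
    rw [hv, Sym2.map_mk] at hf
    have he := e.2
    rw [hv] at he
    exact ⟨v, he, (Sym2.congr_right.1 hf).symm⟩

theorem exists_surjective_isLocallySurjHom (hεG : OrientOK G εG) (hεH : OrientOK H εH)
    (hh : IsPMorphismRel (PosBotLe G εG) (PosBotLe H εH) h) (hsurj : Function.Surjective h) :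
    ∃ g : VG → VH, Function.Surjective g ∧ IsLocallySurjHom G H g := by
  choose g hg using exists_map_ver_eq hεG hεH hh hsurj
  exact ⟨g, surjective_of_map_ver hεG hεH hh hsurj hg,
    isLocallySurjHom_of_map_ver hεG hεH hh hsurj hg⟩

end IsPMorphismRel

namespace PosElem

variable {VG VH : Type} {G : SimpleGraph VG} {H : SimpleGraph VH}
  {εG : ↥G.edgeSet → VG × VG} {εH : ↥H.edgeSet → VH × VH}

noncomputable def map (εG : ↥G.edgeSet → VG × VG) (εH : ↥H.edgeSet → VH × VH) (φ : G →g H) :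
    PosElem VG ↥G.edgeSet → PosElem VH ↥H.edgeSet
  | .ver v => .ver (φ v)
  | .verA v => .verA (φ v)
  | .verB v => .verB (φ v)
  | .edge1 e => edgeAbove εH (φ.mapEdgeSet e) (φ (εG e).1)
  | .edge2 e => edgeAbove εH (φ.mapEdgeSet e) (φ (εG e).2)
  | .top1 => .top1
  | .top2 => .top2
  | .infA => .infA
  | .infB => .infB

variable (φ : G →g H)

theorem coe_mapEdgeSet (hεG : OrientOK G εG) (e : ↥G.edgeSet) :
    (φ.mapEdgeSet e : Sym2 VH) = s(φ (εG e).1, φ (εG e).2) := by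
  rw [SimpleGraph.Hom.mapEdgeSet_coe, hεG e, Sym2.map_mk]

theorem map_edgeAbove (hεG : OrientOK G εG) {e : ↥G.edgeSet} {a : VG} (ha : a ∈ (e : Sym2 VG)) :
    map εG εH φ (edgeAbove εG e a) = edgeAbove εH (φ.mapEdgeSet e) (φ a) := by
  rcases edgeAbove_cases hεG ha with ⟨rfl, he⟩ | ⟨rfl, he⟩ <;> rw [he] <;> rfl

theorem posLe_map_of_posCov (hεG : OrientOK G εG) (hεH : OrientOK H εH)
    {x y : PosElem VG ↥G.edgeSet} (hxy : PosCov G εG x y) :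
    PosLe H εH (map εG εH φ x) (map εG εH φ y) := by
  have hcoe := coe_mapEdgeSet φ hεG
  cases hxy with
  | ver_verA v => exact .single (.ver_verA _)
  | ver_verB v => exact .single (.ver_verB _)
  | verA_infA v => exact .single (.verA_infA _)
  | verB_infB v => exact .single (.verB_infB _)
  | edge1_top1 e | edge2_top1 e => exact edgeAbove_le_top _ _ (.inl rfl)
  | edge1_top2 e | edge2_top2 e => exact edgeAbove_le_top _ _ (.inr rfl)
  | isolA_top1 v _ => exact verA_le_top hεH _ (.inl rfl)
  | isolA_top2 v _ => exact verA_le_top hεH _ (.inr rfl)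
  | isolB_top1 v _ => exact verB_le_top hεH _ (.inl rfl)
  | isolB_top2 v _ => exact verB_le_top hεH _ (.inr rfl)
  | ua_edge1 e => exact verA_le_edgeAbove hεH (hcoe e ▸ Sym2.mem_mk_left _ _)
  | va_edge2 e => exact verA_le_edgeAbove hεH (hcoe e ▸ Sym2.mem_mk_right _ _)
  | vb_edge1 e => exact verB_le_edgeAbove hεH (hcoe e)
  | ub_edge2 e => exact verB_le_edgeAbove hεH ((hcoe e).trans Sym2.eq_swap)

theorem posLe_map (hεG : OrientOK G εG) (hεH : OrientOK H εH) {x y : PosElem VG ↥G.edgeSet}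
    (hxy : PosLe G εG x y) : PosLe H εH (map εG εH φ x) (map εG εH φ y) := by
  induction hxy with
  | refl => exact .refl
  | tail _ hyz ih => exact ih.trans (posLe_map_of_posCov φ hεG hεH hyz)

variable {φ}

theorem exists_edge_lift (hφ : ∀ u w, H.Adj (φ u) w → ∃ v, G.Adj u v ∧ φ v = w) {v : VG} {p : VH}
    (f : ↥H.edgeSet) (hf : (f : Sym2 VH) = s(p, φ v)) :
    ∃ (e : ↥G.edgeSet) (u : VG), (e : Sym2 VG) = s(u, v) ∧ φ u = p ∧ φ.mapEdgeSet e = f := by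
  have hadj : H.Adj (φ v) p := by
    rw [← SimpleGraph.mem_edgeSet, Sym2.eq_swap, ← hf]
    exact f.2
  obtain ⟨u, hvu, rfl⟩ := hφ v p hadj
  exact ⟨⟨s(u, v), hvu.symm⟩, u, rfl, rfl, Subtype.ext (by simp [hf])⟩

theorem exists_posLe_map_eq (hεG : OrientOK G εG) (hεH : OrientOK H εH)
    (hφ : ∀ u w, H.Adj (φ u) w → ∃ v, G.Adj u v ∧ φ v = w) {x : PosElem VG ↥G.edgeSet}
    {y : PosElem VH ↥H.edgeSet} (hxy : PosLe H εH (map εG εH φ x) y) :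
    ∃ z, PosLe G εG x z ∧ map εG εH φ z = y := by
  have lift_verA : ∀ {v y}, PosLe H εH (.verA (φ v)) y →
      ∃ z, PosLe G εG (.verA v) z ∧ map εG εH φ z = y := by
    intro v y hy
    rcases eq_or_exists_of_verA_le hεH hy with rfl | rfl | rfl | rfl | ⟨f, p, hf, rfl⟩
    · exact ⟨.verA v, .refl, rfl⟩
    · exact ⟨.top1, verA_le_top hεG v (.inl rfl), rfl⟩
    · exact ⟨.top2, verA_le_top hεG v (.inr rfl), rfl⟩
    · exact ⟨.infA, .single (.verA_infA v), rfl⟩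
    · obtain ⟨e, u, he, rfl, hef⟩ := exists_edge_lift hφ f (hf.trans Sym2.eq_swap)
      have hv : v ∈ (e : Sym2 VG) := he ▸ Sym2.mem_mk_right u v
      exact ⟨edgeAbove εG e v, verA_le_edgeAbove hεG hv, by rw [map_edgeAbove φ hεG hv, hef]⟩
  have lift_verB : ∀ {v y}, PosLe H εH (.verB (φ v)) y →
      ∃ z, PosLe G εG (.verB v) z ∧ map εG εH φ z = y := by
    intro v y hy
    rcases eq_or_exists_of_verB_le hεH hy with rfl | rfl | rfl | rfl | ⟨f, p, hf, rfl⟩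
    · exact ⟨.verB v, .refl, rfl⟩
    · exact ⟨.top1, verB_le_top hεG v (.inl rfl), rfl⟩
    · exact ⟨.top2, verB_le_top hεG v (.inr rfl), rfl⟩
    · exact ⟨.infB, .single (.verB_infB v), rfl⟩
    · obtain ⟨e, u, he, rfl, hef⟩ := exists_edge_lift hφ f hf
      have hu : u ∈ (e : Sym2 VG) := he ▸ Sym2.mem_mk_left u v
      exact ⟨edgeAbove εG e u, verB_le_edgeAbove hεG he, by rw [map_edgeAbove φ hεG hu, hef]⟩
  have lift_edge : ∀ {e : ↥G.edgeSet} {a : VG} {y}, a ∈ (e : Sym2 VG) →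
      PosLe H εH (map εG εH φ (edgeAbove εG e a)) y →
      ∃ z, PosLe G εG (edgeAbove εG e a) z ∧ map εG εH φ z = y := by
    intro e a y ha hy
    rw [map_edgeAbove φ hεG ha] at hy
    have hφa : φ a ∈ (φ.mapEdgeSet e : Sym2 VH) := by
      rw [SimpleGraph.Hom.mapEdgeSet_coe]
      exact Sym2.mem_map.2 ⟨a, ha, rfl⟩
    rcases eq_or_eq_top_of_edgeAbove_le hεH hφa hy with rfl | rfl | rfl
    · exact ⟨_, .refl, map_edgeAbove φ hεG ha⟩
    · exact ⟨.top1, edgeAbove_le_top e a (.inl rfl), rfl⟩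
    · exact ⟨.top2, edgeAbove_le_top e a (.inr rfl), rfl⟩
  cases x with
  | ver v =>
    rcases eq_or_verA_le_or_verB_le_of_ver_le hεH hxy with rfl | hy | hy
    · exact ⟨.ver v, .refl, rfl⟩
    · obtain ⟨z, hz, rfl⟩ := lift_verA hy
      exact ⟨z, .head (.ver_verA v) hz, rfl⟩
    · obtain ⟨z, hz, rfl⟩ := lift_verB hy
      exact ⟨z, .head (.ver_verB v) hz, rfl⟩
  | verA v => exact lift_verA hxy
  | verB v => exact lift_verB hxy
  | edge1 e =>
    obtain ⟨a, b, hab, he⟩ := exists_edgeAbove_eq hεG e (.inl rfl)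
    rw [he] at hxy ⊢
    exact lift_edge (hab ▸ Sym2.mem_mk_left a b) hxy
  | edge2 e =>
    obtain ⟨a, b, hab, he⟩ := exists_edgeAbove_eq hεG e (.inr rfl)
    rw [he] at hxy ⊢
    exact lift_edge (hab ▸ Sym2.mem_mk_left a b) hxy
  | _ =>
    replace hxy := leExplicit_of_posLe hxy
    cases y <;> simp only [LeExplicit, map] at hxy
    all_goals exact ⟨_, .refl, rfl⟩

theorem map_surjective (hεG : OrientOK G εG) (hεH : OrientOK H εH)
    (hsurj : Function.Surjective φ) (hφ : ∀ u w, H.Adj (φ u) w → ∃ v, G.Adj u v ∧ φ v = w) :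
    Function.Surjective (map εG εH φ) := by
  have above_ver : ∀ {p y}, LeExplicit εH (.ver p) y → ∃ x, map εG εH φ x = y := by
    intro p y hy
    obtain ⟨v, rfl⟩ := hsurj p
    obtain ⟨x, -, hx⟩ := exists_posLe_map_eq (x := .ver v) hεG hεH hφ (posLe_of_leExplicit hεH hy)
    exact ⟨x, hx⟩
  intro y
  cases y with
  | top1 => exact ⟨.top1, rfl⟩
  | top2 => exact ⟨.top2, rfl⟩
  | infA => exact ⟨.infA, rfl⟩
  | infB => exact ⟨.infB, rfl⟩
  | edge1 f | edge2 f => exact above_ver (p := (εH f).1) (.inl rfl)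
  | ver p | verA p | verB p => exact above_ver (p := p) rfl

theorem surjective_isPMorphismRel_optionMap {F : PosElem VG ↥G.edgeSet → PosElem VH ↥H.edgeSet}
    (hF : IsPMorphismRel (PosLe G εG) (PosLe H εH) F) (hsurj : Function.Surjective F) :
    Function.Surjective (Option.map F) ∧
      IsPMorphismRel (PosBotLe G εG) (PosBotLe H εH) (Option.map F) := by
  refine ⟨?_, ?_, ?_⟩
  · rintro (_ | y)
    · exact ⟨none, rfl⟩
    · obtain ⟨x, rfl⟩ := hsurj y
      exact ⟨some x, rfl⟩
  · rintro (_ | x) (_ | y) hxy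
    exacts [trivial, trivial, hxy.elim, hF.1 x y hxy]
  · rintro (_ | x) (_ | y) hxy
    · exact ⟨none, trivial, rfl⟩
    · obtain ⟨z, rfl⟩ := hsurj y
      exact ⟨some z, trivial, rfl⟩
    · exact hxy.elim
    · obtain ⟨z, hxz, rfl⟩ := hF.2 x y hxy
      exact ⟨some z, hxz, rfl⟩

end PosElem

theorem IsLocallySurjHom.exists_surjective_pMorphism {VG VH : Type} {G : SimpleGraph VG}
    {H : SimpleGraph VH} {εG : ↥G.edgeSet → VG × VG} {εH : ↥H.edgeSet → VH × VH}
    (hεG : OrientOK G εG) (hεH : OrientOK H εH) {g : VG → VH} (hg : IsLocallySurjHom G H g)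
    (hsurj : Function.Surjective g) :
    ∃ h : Option (PosElem VG ↥G.edgeSet) → Option (PosElem VH ↥H.edgeSet),
      Function.Surjective h ∧ IsPMorphismRel (PosBotLe G εG) (PosBotLe H εH) h := by
  let φ : G →g H := ⟨g, hg.1 _ _⟩
  have hF : IsPMorphismRel (PosLe G εG) (PosLe H εH) (PosElem.map εG εH φ) :=
    ⟨fun _ _ => PosElem.posLe_map φ hεG hεH, fun _ _ => PosElem.exists_posLe_map_eq hεG hεH hg.2⟩
  exact ⟨_, PosElem.surjective_isPMorphismRel_optionMap hF
    (PosElem.map_surjective hεG hεH hsurj hg.2)⟩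

theorem lsh_iff_pMorphism_bot_general {VG VH : Type}
    (G : SimpleGraph VG) (H : SimpleGraph VH)
    (εG : ↥G.edgeSet → VG × VG) (hεG : OrientOK G εG)
    (εH : ↥H.edgeSet → VH × VH) (hεH : OrientOK H εH) :
    (∃ g : VG → VH, Function.Surjective g ∧ IsLocallySurjHom G H g) ↔
    (∃ h : Option (PosElem VG ↥G.edgeSet) → Option (PosElem VH ↥H.edgeSet),
      Function.Surjective h ∧ IsPMorphismRel (PosBotLe G εG) (PosBotLe H εH) h) :=
  ⟨fun ⟨_, hsurj, hg⟩ => hg.exists_surjective_pMorphism hεG hεH hsurj,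
    fun ⟨_, hsurj, hh⟩ => hh.exists_surjective_isLocallySurjHom hεG hεH hsurj⟩

theorem lsh_iff_pMorphism_bot {VG VH : Type} [Fintype VG] [Fintype VH] [Nonempty VH]
    (G : SimpleGraph VG) (H : SimpleGraph VH)
    (εG : ↥G.edgeSet → VG × VG) (hεG : OrientOK G εG)
    (εH : ↥H.edgeSet → VH × VH) (hεH : OrientOK H εH) :
    (∃ g : VG → VH, Function.Surjective g ∧ IsLocallySurjHom G H g) ↔
    (∃ h : Option (PosElem VG ↥G.edgeSet) → Option (PosElem VH ↥H.edgeSet),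
      Function.Surjective h ∧ IsPMorphismRel (PosBotLe G εG) (PosBotLe H εH) h) :=
  lsh_iff_pMorphism_bot_general G H εG hεG εH hεH
end

section
/- Let T be a finite tree poset, let Q be a finite poset, let s, t ∈ T with s ≤ t, and let p, q ∈ Q with p ≤ q. If there exists a surjective p-morphism from the upset ↑t of T onto the upset ↑p of Q, then there exists a surjective p-morphism from the upset ↑s of T onto the upset ↑q of Q. -/
/-- A p-morphism between posets: the homomorphism property (HP) and the
backward property (BP). -/
def IsPMorphism {P Q : Type} [PartialOrder P] [PartialOrder Q] (h : P → Q) : Prop :=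
  Monotone h ∧ ∀ (x : P) (y : Q), h x ≤ y → ∃ z : P, x ≤ z ∧ h z = y

/-- A poset is a tree if it has a minimum element (a root) and every principal
downset is a chain. -/
def IsTreePoset (T : Type) [PartialOrder T] : Prop :=
  (∃ r : T, ∀ x : T, r ≤ x) ∧ ∀ t : T, IsChain (· ≤ ·) (Set.Iic t)

/-- There exists a surjective p-morphism from the upset `↑t` onto the upset `↑q`
(with the inherited orders). -/
def HasSurjPMorphUp {T Q : Type} [PartialOrder T] [PartialOrder Q] (t : T) (q : Q) : Prop :=
  ∃ h : {x : T // t ≤ x} → {y : Q // q ≤ y}, Function.Surjective h ∧ IsPMorphism h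

theorem monotonicity_lemma {T Q : Type} [PartialOrder T] [PartialOrder Q]
    [Fintype T] [Fintype Q] (htree : IsTreePoset T)
    (s t : T) (p q : Q) (hst : s ≤ t) (hpq : p ≤ q)
    (hex : HasSurjPMorphUp t p) :
    HasSurjPMorphUp s q := by
  classical
  obtain ⟨h, hsurj, hmono, hbp⟩ := hex
  -- find z ≥ t with h z = q
  obtain ⟨x0, hx0⟩ := hsurj ⟨p, le_refl p⟩
  obtain ⟨z0, hx0z0, hz0⟩ := hbp x0 ⟨q, hpq⟩ (by rw [hx0]; exact hpq)
  set z : T := z0.val with hzdef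
  have htz : t ≤ z := z0.property
  -- a maximal element m ≥ q
  obtain ⟨m, hqm, hmmax⟩ : ∃ m : Q, q ≤ m ∧ ∀ y : Q, q ≤ y → m ≤ y → m = y := by
    obtain ⟨m, hm, hmax⟩ := Set.Finite.exists_maximalFor id (Set.Ici q)
      (Set.toFinite _) ⟨q, le_refl q⟩
    exact ⟨m, hm, fun y hy hmy => le_antisymm hmy (hmax hy hmy)⟩
  -- key fact from h z0 = q
  have hqz : ∀ (x : T) (hx : z ≤ x), q ≤ (h ⟨x, htz.trans hx⟩).val := by
    intro x hx
    have : h z0 ≤ h ⟨x, htz.trans hx⟩ := hmono (by exact hx : z0 ≤ ⟨x, htz.trans hx⟩)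
    rw [hz0] at this
    exact this
  -- the comparability fact from the tree structure
  have hcomp : ∀ a b : T, a ≤ b → z ≤ b → z ≤ a ∨ a ≤ z := by
    intro a b hab hzb
    rcases eq_or_ne a z with rfl | hne
    · exact Or.inl le_rfl
    · rcases (htree.2 b) (Set.mem_Iic.mpr hab) (Set.mem_Iic.mpr hzb) hne with h1 | h1
      · exact Or.inr h1
      · exact Or.inl h1
  -- covering property: anything ≥ q is hit above z
  have hcover : ∀ y : Q, q ≤ y → ∃ w : {x : T // t ≤ x}, z ≤ w.val ∧ (h w).val = y := by
    intro y hy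
    obtain ⟨w, hzw, hw⟩ := hbp z0 ⟨y, hpq.trans hy⟩ (by rw [hz0]; exact hy)
    exact ⟨w, hzw, by rw [hw]⟩
  refine ⟨fun x => if hzx : z ≤ x.val then ⟨(h ⟨x.val, htz.trans hzx⟩).val, hqz x.val hzx⟩
    else if hxz : x.val ≤ z then ⟨q, le_refl q⟩ else ⟨m, hqm⟩, ?_, ?_, ?_⟩
  · -- surjectivity
    intro y
    obtain ⟨w, hzw, hw⟩ := hcover y.val y.property
    refine ⟨⟨w.val, hst.trans (htz.trans hzw)⟩, ?_⟩
    dsimp only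
    rw [dif_pos hzw]
    apply Subtype.ext
    dsimp only
    rw [show (⟨w.val, htz.trans hzw⟩ : {x : T // t ≤ x}) = w from Subtype.ext rfl]
    exact hw
  · -- monotone
    intro a b hab
    have hab' : a.val ≤ b.val := hab
    dsimp only
    by_cases hza : z ≤ a.val
    · have hzb : z ≤ b.val := hza.trans hab'
      rw [dif_pos hza, dif_pos hzb]
      exact hmono (by exact hab' : (⟨a.val, htz.trans hza⟩ : {x : T // t ≤ x}) ≤ ⟨b.val, htz.trans hzb⟩)
    · rw [dif_neg hza]
      by_cases haz : a.val ≤ z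
      · rw [dif_pos haz]
        by_cases hzb : z ≤ b.val
        · rw [dif_pos hzb]; exact hqz b.val hzb
        · rw [dif_neg hzb]
          by_cases hbz : b.val ≤ z
          · rw [dif_pos hbz]
          · rw [dif_neg hbz]; exact hqm
      · rw [dif_neg haz]
        by_cases hzb : z ≤ b.val
        · rcases hcomp a.val b.val hab' hzb with h1 | h1
          · exact absurd h1 hza
          · exact absurd h1 haz
        · rw [dif_neg hzb]
          by_cases hbz : b.val ≤ z
          · exact absurd (hab'.trans hbz) haz
          · rw [dif_neg hbz]
  · -- backward property
    intro x y hle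
    dsimp only at hle ⊢
    by_cases hzx : z ≤ x.val
    · rw [dif_pos hzx] at hle
      obtain ⟨w, hxw, hw⟩ := hbp ⟨x.val, htz.trans hzx⟩ ⟨y.val, hpq.trans y.property⟩
        (by exact hle)
      have hxw' : x.val ≤ w.val := hxw
      have hzw : z ≤ w.val := hzx.trans hxw'
      refine ⟨⟨w.val, x.property.trans hxw'⟩, hxw', ?_⟩
      rw [dif_pos hzw]
      apply Subtype.ext
      dsimp only
      rw [show (⟨w.val, htz.trans hzw⟩ : {x : T // t ≤ x}) = w from Subtype.ext rfl, hw]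
    · rw [dif_neg hzx] at hle
      by_cases hxz : x.val ≤ z
      · rw [dif_pos hxz] at hle
        obtain ⟨w, hzw, hw⟩ := hcover y.val y.property
        have hxw : x.val ≤ w.val := hxz.trans hzw
        refine ⟨⟨w.val, x.property.trans hxw⟩, hxw, ?_⟩
        rw [dif_pos hzw]
        apply Subtype.ext
        dsimp only
        rw [show (⟨w.val, htz.trans hzw⟩ : {x : T // t ≤ x}) = w from Subtype.ext rfl]
        exact hw
      · rw [dif_neg hxz] at hle
        have : m = y.val := hmmax y.val y.property hle
        refine ⟨x, le_refl x, ?_⟩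
        rw [dif_neg hzx, dif_neg hxz]
        exact Subtype.ext this
end

section
/- Let T be a finite tree poset, let Q be a finite poset, let t ∈ T and q ∈ Q. If there exists a surjective p-morphism from the upset ↑t of T onto the upset ↑q of Q, then for every immediate successor p of q in Q there exists an immediate successor s of t in T such that there is a surjective p-morphism from ↑s onto ↑p. -/
/-!
An immediate successor `p` of `q = h t` is the image of some `x > t`, and the child `s` of `t`
below `x` satisfies `h s ≤ p`. So it suffices to show that a p-morphism from a
tree `↑s` onto `↑(h s)` can be traded for one onto `↑p` whenever `h s ≤ p`. This goes by
induction over the finite tree: send the root to `p`, and on the branch of each child `s'`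
use `h` itself if `p ≤ h s'`, the inductively obtained map onto `↑p` if `h s' ≤ p`, and a
constant map to a maximal element above `p` otherwise. Distinct branches are incomparable,
so these maps glue.
-/

open Set

variable {T Q : Type} [PartialOrder T]

lemma eq_of_covBy_of_le (htree : ∀ x : T, IsChain (· ≤ ·) (Iic x)) {t s₁ s₂ x : T}
    (h₁ : t ⋖ s₁) (h₂ : t ⋖ s₂) (hx₁ : s₁ ≤ x) (hx₂ : s₂ ≤ x) : s₁ = s₂ := by
  rcases htree x |>.total hx₁ hx₂ with h | h
  · exact (h₂.eq_or_eq h₁.le h).resolve_left h₁.ne'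
  · exact ((h₁.eq_or_eq h₂.le h).resolve_left h₂.ne').symm

/-- In a tree: `G s` on the branch `↑s` of each immediate successor `s` of `t`, and `p`
elsewhere. -/
noncomputable def branchwise (t : T) (p : Q) (G : T → T → Q) (x : T) : Q :=
  open Classical in if hx : ∃ s, t ⋖ s ∧ s ≤ x then G hx.choose x else p

section Branchwise

variable {t s : T} {p : Q} {G : T → T → Q}

lemma branchwise_self : branchwise t p G t = p :=
  dif_neg fun ⟨_, hs, hst⟩ => hs.lt.not_ge hst

lemma branchwise_eq (htree : ∀ x : T, IsChain (· ≤ ·) (Iic x)) (hs : t ⋖ s) {x : T}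
    (hsx : s ≤ x) : branchwise t p G x = G s x := by
  have hx : ∃ s, t ⋖ s ∧ s ≤ x := ⟨s, hs, hsx⟩
  rw [branchwise, dif_pos hx,
    eq_of_covBy_of_le htree hx.choose_spec.1 hs hx.choose_spec.2 hsx]

end Branchwise

variable [PartialOrder Q]

/-- `h` restricts to a p-morphism from `↑t` onto `↑(h t)`. -/
structure IsPMorphismOnIci (h : T → Q) (t : T) : Prop where
  monotoneOn : MonotoneOn h (Ici t)
  exists_eq_of_le : ∀ ⦃x⦄, t ≤ x → ∀ ⦃y⦄, h x ≤ y → ∃ z, x ≤ z ∧ h z = y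

namespace IsPMorphismOnIci

variable {h : T → Q} {t s : T}

lemma of_le (hh : IsPMorphismOnIci h t) (hts : t ≤ s) : IsPMorphismOnIci h s where
  monotoneOn _ hx _ hy hxy := hh.monotoneOn (hts.trans hx) (hts.trans hy) hxy
  exists_eq_of_le _ hx := hh.exists_eq_of_le (hts.trans hx)

lemma const {m : Q} (hm : IsMax m) (t : T) : IsPMorphismOnIci (fun _ => m) t where
  monotoneOn _ _ _ _ _ := le_rfl
  exists_eq_of_le x _ _ hy := ⟨x, le_rfl, hm.eq_of_le hy⟩

end IsPMorphismOnIci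

theorem hasSurjPMorphUp_iff {t : T} {q : Q} :
    HasSurjPMorphUp t q ↔ ∃ h : T → Q, h t = q ∧ IsPMorphismOnIci h t := by
  classical
  constructor
  · rintro ⟨f, hf_surj, hf_mono, hf_back⟩
    let h : T → Q := fun x => if hx : t ≤ x then f ⟨x, hx⟩ else q
    have h_eq : ∀ x (hx : t ≤ x), h x = f ⟨x, hx⟩ := fun x hx => dif_pos hx
    refine ⟨h, ?_, ⟨?_, ?_⟩⟩
    · obtain ⟨a, ha⟩ := hf_surj ⟨q, le_rfl⟩
      have hta : f ⟨t, le_rfl⟩ ≤ f a := hf_mono a.2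
      rw [ha] at hta
      rw [h_eq t le_rfl]
      exact le_antisymm hta (f _).2
    · intro x (hx : t ≤ x) y (hy : t ≤ y) hxy
      rw [h_eq x hx, h_eq y hy]
      exact hf_mono hxy
    · intro x hx y hxy
      rw [h_eq x hx] at hxy
      obtain ⟨z, hxz, hz⟩ := hf_back ⟨x, hx⟩ ⟨y, (f _).2.trans hxy⟩ hxy
      exact ⟨z, hxz, by rw [h_eq z z.2, hz]⟩
  · rintro ⟨h, rfl, hh⟩
    refine ⟨fun x => ⟨h x, hh.monotoneOn le_rfl x.2 x.2⟩, fun y => ?_,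
      fun x y hxy => hh.monotoneOn x.2 y.2 hxy, fun x y hxy => ?_⟩
    · obtain ⟨x, htx, hx⟩ := hh.exists_eq_of_le le_rfl y.2
      exact ⟨⟨x, htx⟩, Subtype.ext hx⟩
    · obtain ⟨z, hxz, hz⟩ := hh.exists_eq_of_le x.2 hxy
      exact ⟨⟨z, x.2.trans hxz⟩, hxz, Subtype.ext hz⟩

lemma isPMorphismOnIci_branchwise [IsStronglyAtomic T]
    (htree : ∀ x : T, IsChain (· ≤ ·) (Iic x)) {t s : T} {p : Q} {G : T → T → Q}
    (hG : ∀ s, t ⋖ s → IsPMorphismOnIci (G s) s ∧ p ≤ G s s) (hs : t ⋖ s) (hGs : G s s = p) :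
    IsPMorphismOnIci (branchwise t p G) t := by
  have p_le : ∀ ⦃x⦄, t ≤ x → p ≤ branchwise t p G x := by
    intro x hx
    rcases hx.eq_or_lt with rfl | htx
    · exact branchwise_self.ge
    obtain ⟨s', hs', hs'x⟩ := exists_covBy_le_of_lt htx
    rw [branchwise_eq htree hs' hs'x]
    exact (hG s' hs').2.trans ((hG s' hs').1.monotoneOn le_rfl hs'x hs'x)
  constructor
  · intro x (hx : t ≤ x) y (hy : t ≤ y) hxy
    rcases hx.eq_or_lt with rfl | htx
    · exact branchwise_self.trans_le (p_le hy)
    obtain ⟨s', hs', hs'x⟩ := exists_covBy_le_of_lt htx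
    rw [branchwise_eq htree hs' hs'x, branchwise_eq htree hs' (hs'x.trans hxy)]
    exact (hG s' hs').1.monotoneOn hs'x (hs'x.trans hxy) hxy
  · intro x hx y hxy
    rcases hx.eq_or_lt with rfl | htx
    · rw [branchwise_self, ← hGs] at hxy
      obtain ⟨z, hsz, hz⟩ := (hG s hs).1.exists_eq_of_le le_rfl hxy
      exact ⟨z, hs.le.trans hsz, by rw [branchwise_eq htree hs hsz, hz]⟩
    obtain ⟨s', hs', hs'x⟩ := exists_covBy_le_of_lt htx
    rw [branchwise_eq htree hs' hs'x] at hxy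
    obtain ⟨z, hxz, hz⟩ := (hG s' hs').1.exists_eq_of_le hs'x hxy
    exact ⟨z, hxz, by rw [branchwise_eq htree hs' (hs'x.trans hxz), hz]⟩

theorem exists_isPMorphismOnIci_of_le [WellFoundedGT T] [IsStronglyAtomic T] [Finite Q]
    (htree : ∀ x : T, IsChain (· ≤ ·) (Iic x)) {t : T} {h : T → Q}
    (hh : IsPMorphismOnIci h t) {p : Q} (hp : h t ≤ p) :
    ∃ g : T → Q, g t = p ∧ IsPMorphismOnIci g t := by
  induction t using WellFoundedGT.induction generalizing h p with
  | _ t ih =>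
  obtain ⟨m, hpm, hm⟩ := Finite.exists_le_maximal (p := fun _ : Q => True) (a := p) trivial
  have branch : ∀ s, ∃ g : T → Q,
      t ⋖ s → IsPMorphismOnIci g s ∧ p ≤ g s ∧ (h s ≤ p → g s = p) := by
    intro s
    by_cases hts : t ⋖ s
    swap
    · exact ⟨h, fun h' => absurd h' hts⟩
    have hhs := hh.of_le hts.le
    by_cases hsp : h s ≤ p
    · obtain ⟨g, hgs, hg⟩ := ih s hts.lt hhs hsp
      exact ⟨g, fun _ => ⟨hg, hgs.ge, fun _ => hgs⟩⟩
    by_cases hps : p ≤ h s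
    · exact ⟨h, fun _ => ⟨hhs, hps, fun h' => absurd h' hsp⟩⟩
    · exact ⟨fun _ => m, fun _ => ⟨.const (maximal_true.1 hm) s, hpm, fun h' => absurd h' hsp⟩⟩
  choose G hG using branch
  obtain ⟨x, htx, hxp⟩ := hh.exists_eq_of_le le_rfl hp
  rcases htx.eq_or_lt with rfl | htx
  · exact ⟨h, hxp, hh⟩
  obtain ⟨s, hs, hsx⟩ := exists_covBy_le_of_lt htx
  have hsp : h s ≤ p := hxp ▸ hh.monotoneOn hs.le htx.le hsx
  exact ⟨branchwise t p G, branchwise_self, isPMorphismOnIci_branchwise htree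
    (fun s' hs' => ⟨(hG s' hs').1, (hG s' hs').2.1⟩) hs ((hG s hs).2.2 hsp)⟩

theorem successors_restriction {T Q : Type} [PartialOrder T] [PartialOrder Q]
    [Fintype T] [Fintype Q] (htree : IsTreePoset T)
    (t : T) (q : Q) (hex : HasSurjPMorphUp t q) :
    ∀ p : Q, q ⋖ p → ∃ s : T, t ⋖ s ∧ HasSurjPMorphUp s p := by
  intro p hqp
  obtain ⟨h, rfl, hh⟩ := hasSurjPMorphUp_iff.1 hex
  obtain ⟨x, htx, rfl⟩ := hh.exists_eq_of_le le_rfl hqp.le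
  have htx : t < x := htx.lt_of_ne (by rintro rfl; exact hqp.ne rfl)
  obtain ⟨s, hts, hsx⟩ := exists_covBy_le_of_lt htx
  obtain ⟨g, hgs, hg⟩ := exists_isPMorphismOnIci_of_le htree.2 (hh.of_le hts.le)
    (hh.monotoneOn hts.le htx.le hsx)
  exact ⟨s, hts, hasSurjPMorphUp_iff.2 ⟨g, hgs, hg⟩⟩
end

section
/- Let T be a finite tree poset, let Q be a finite poset, let t ∈ T and q ∈ Q. For x ∈ T and y ∈ Q write y ∈ Q_x to mean that there exists a surjective p-morphism from ↑x onto ↑y. Assume that q ∉ Q_s for every immediate successor s of t. Then q ∈ Q_t if and only if there exists an injective map f : isucc(q) → isucc(t) such that p ∈ Q_{f(p)} for every immediate successor p of q. -/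
/-- Restriction of a p-morphism from `↑t` to `↑s` (for `t ≤ s`) is a surjective
p-morphism onto `↑(h s)`. -/
lemma restrict_pmorph {T Q : Type} [PartialOrder T] [PartialOrder Q] {t : T} {q : Q}
    (h : {x : T // t ≤ x} → {y : Q // q ≤ y}) (hpm : IsPMorphism h)
    {s : T} (hs : t ≤ s) : HasSurjPMorphUp s (h ⟨s, hs⟩).1 := by
  obtain ⟨hmono, hbp⟩ := hpm
  refine ⟨fun x => ⟨(h ⟨x.1, hs.trans x.2⟩).1, ?_⟩, ?_, ?_, ?_⟩
  · exact hmono (show (⟨s, hs⟩ : {x : T // t ≤ x}) ≤ ⟨x.1, hs.trans x.2⟩ from x.2)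
  · rintro ⟨z, hz⟩
    obtain ⟨w, hsw, hw⟩ := hbp ⟨s, hs⟩ ⟨z, (h ⟨s, hs⟩).2.trans hz⟩ hz
    refine ⟨⟨w.1, hsw⟩, ?_⟩
    apply Subtype.ext
    simpa using congrArg Subtype.val hw
  · intro a b hab
    exact hmono (show (⟨a.1, _⟩ : {x : T // t ≤ x}) ≤ ⟨b.1, _⟩ from hab)
  · intro x y hxy
    obtain ⟨w, hw1, hw2⟩ := hbp ⟨x.1, hs.trans x.2⟩ ⟨y.1, (h ⟨s, hs⟩).2.trans y.2⟩ hxy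
    refine ⟨⟨w.1, x.2.trans hw1⟩, hw1, ?_⟩
    apply Subtype.ext
    simpa using congrArg Subtype.val hw2

/-- In a finite poset every element lies below a maximal element. -/
lemma exists_max_above {Q : Type} [PartialOrder Q] [Fintype Q] (q : Q) :
    ∃ m : Q, q ≤ m ∧ ∀ y, m ≤ y → y = m := by
  classical
  obtain ⟨m, hm, hmax⟩ : ∃ m ∈ Finset.univ.filter (q ≤ ·),
      ∀ x ∈ Finset.univ.filter (q ≤ ·), ¬ m < x := by
    obtain ⟨m, hm, hmx⟩ := Finset.exists_maximal (s := Finset.univ.filter (q ≤ ·)) ⟨q, by simp⟩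
    exact ⟨m, hm, fun x hx hlt => lt_irrefl m (lt_of_lt_of_le hlt (hmx hx hlt.le))⟩
  simp only [Finset.mem_filter, Finset.mem_univ, true_and] at hm hmax
  refine ⟨m, hm, fun y hy => ?_⟩
  have := hmax y (hm.trans hy)
  exact le_antisymm (by_contra fun h => this (lt_of_le_of_ne hy (fun he => h (he ▸ le_refl _)))) hy

/-- In a tree poset, the immediate successor of `t` below a given element is unique. -/
lemma tree_succ_unique {T : Type} [PartialOrder T] (htree : IsTreePoset T)
    {t s s' x : T} (h1 : t ⋖ s) (h2 : t ⋖ s') (hx1 : s ≤ x) (hx2 : s' ≤ x) : s = s' := by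
  rcases eq_or_ne s s' with h | h
  · exact h
  have := htree.2 x hx1 hx2 h
  rcases this with hle | hle
  · exact absurd (lt_of_le_of_ne hle h) (h2.2 h1.1)
  · exact absurd (lt_of_le_of_ne hle (Ne.symm h)) (h1.2 h2.1)

theorem matching_criterion {T Q : Type} [PartialOrder T] [PartialOrder Q]
    [Fintype T] [Fintype Q] (htree : IsTreePoset T)
    (t : T) (q : Q) (hq : ∀ s : T, t ⋖ s → ¬ HasSurjPMorphUp s q) :
    HasSurjPMorphUp t q ↔
      ∃ f : {p : Q // q ⋖ p} → {s : T // t ⋖ s},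
        Function.Injective f ∧ ∀ p : {p : Q // q ⋖ p}, HasSurjPMorphUp (f p).1 p.1 := by
  classical
  constructor
  · rintro ⟨h, hsurj, hpm⟩
    have hmono := hpm.1
    have hbp := hpm.2
    -- h maps t to q
    have hht : h ⟨t, le_refl t⟩ = ⟨q, le_refl q⟩ := by
      obtain ⟨z, hz⟩ := hsurj ⟨q, le_refl q⟩
      have h1 : h ⟨t, le_refl t⟩ ≤ h z :=
        hmono (show (⟨t, le_refl t⟩ : {x : T // t ≤ x}) ≤ z from z.2)
      rw [hz] at h1
      exact le_antisymm h1 (show (⟨q, le_refl q⟩ : {y : Q // q ≤ y}) ≤ h ⟨t, le_refl t⟩ from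
        (h ⟨t, le_refl t⟩).2)
    have key : ∀ p : {p : Q // q ⋖ p}, ∃ s : {s : T // t ⋖ s},
        (h ⟨s.1, s.2.le⟩).1 = p.1 ∧ HasSurjPMorphUp s.1 p.1 := by
      intro p
      obtain ⟨z, htz, hz⟩ := hbp ⟨t, le_refl t⟩ ⟨p.1, p.2.le⟩
        (by rw [hht]; exact (show q ≤ p.1 from p.2.le))
      have hzt : t < z.1 := by
        rcases z.2.lt_or_eq with hlt | heq
        · exact hlt
        · exfalso
          have : h z = ⟨q, le_refl q⟩ := by
            have : z = ⟨t, le_refl t⟩ := Subtype.ext heq.symm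
            rw [this, hht]
          rw [hz] at this
          exact p.2.ne (congrArg Subtype.val this).symm
      obtain ⟨s, hts, hsz⟩ := exists_covBy_le_of_lt hzt
      have hrest : HasSurjPMorphUp s (h ⟨s, hts.le⟩).1 := restrict_pmorph h hpm hts.le
      have hval : (h ⟨s, hts.le⟩).1 = p.1 := by
        have hle : (h ⟨s, hts.le⟩).1 ≤ p.1 := by
          have := hmono (show (⟨s, hts.le⟩ : {x : T // t ≤ x}) ≤ z from hsz)
          rw [hz] at this
          exact this
        have hne : (h ⟨s, hts.le⟩).1 ≠ q := by
          intro he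
          exact hq s hts (he ▸ hrest)
        have hqlt : q < (h ⟨s, hts.le⟩).1 :=
          lt_of_le_of_ne (h ⟨s, hts.le⟩).2 (Ne.symm hne)
        rcases hle.lt_or_eq with hlt | heq
        · exact absurd hlt (p.2.2 hqlt)
        · exact heq
      exact ⟨⟨s, hts⟩, hval, hval ▸ hrest⟩
    choose F hF1 hF2 using key
    refine ⟨F, ?_, hF2⟩
    intro p p' hpp
    apply Subtype.ext
    have h1 := hF1 p
    have h2 := hF1 p'
    rw [hpp] at h1
    rw [← h1, ← h2]
  · rintro ⟨f, finj, hf⟩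
    choose H Hsurj Hpm using hf
    obtain ⟨m, hqm, hmmax⟩ := exists_max_above q
    have hSex : ∀ x : T, t < x → ∃ s, t ⋖ s ∧ s ≤ x := fun x hx => exists_covBy_le_of_lt hx
    choose S hS1 hS2 using hSex
    have huniq : ∀ {s x : T} (hx : t < x), t ⋖ s → s ≤ x → s = S x hx :=
      fun {s x} hx hs hsx => tree_succ_unique htree hs (hS1 x hx) hsx (hS2 x hx)
    set g : ∀ x : T, t ≤ x → Q := fun x _ =>
      if hlt : t < x then
        if hp : ∃ p : {p : Q // q ⋖ p}, (f p).1 = S x hlt then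
          (H (Classical.choose hp) ⟨x, by
            rw [Classical.choose_spec hp]; exact hS2 x hlt⟩).1
        else m
      else q with hgdef
    -- characterization lemmas
    have key1 : ∀ (x : T) (hx : t ≤ x) (p : {p : Q // q ⋖ p}) (hfp : (f p).1 ≤ x),
        g x hx = (H p ⟨x, hfp⟩).1 := by
      intro x hx p hfp
      have hlt : t < x := lt_of_lt_of_le (f p).2.lt hfp
      have hSp : (f p).1 = S x hlt := huniq hlt (f p).2 hfp
      have hp : ∃ p' : {p : Q // q ⋖ p}, (f p').1 = S x hlt := ⟨p, hSp⟩
      have hstep : g x hx = (H (Classical.choose hp) ⟨x, by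
          rw [Classical.choose_spec hp]; exact hS2 x hlt⟩).1 := by
        rw [hgdef]
        beta_reduce
        rw [dif_pos hlt, dif_pos hp]
      rw [hstep]
      obtain rfl : p = Classical.choose hp := by
        apply finj
        apply Subtype.ext
        rw [Classical.choose_spec hp, hSp]
      rfl
    have key2 : ∀ (x : T) (hx : t ≤ x) (hlt : t < x),
        (¬ ∃ p : {p : Q // q ⋖ p}, (f p).1 ≤ x) → g x hx = m := by
      intro x hx hlt hnp
      rw [hgdef]
      beta_reduce
      rw [dif_pos hlt, dif_neg]
      rintro ⟨p, hp⟩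
      exact hnp ⟨p, hp ▸ hS2 x hlt⟩
    have key3 : ∀ (hx : t ≤ t), g t hx = q := by
      intro hx
      rw [hgdef]
      beta_reduce
      rw [dif_neg (lt_irrefl t)]
    have key3' : ∀ (x : T) (hx : t ≤ x), x = t → g x hx = q := by
      rintro x hx rfl
      exact key3 hx
    have keyq : ∀ (x : T) (hx : t ≤ x), q ≤ g x hx := by
      intro x hx
      by_cases hlt : t < x
      · by_cases hp : ∃ p : {p : Q // q ⋖ p}, (f p).1 ≤ x
        · obtain ⟨p, hpx⟩ := hp
          rw [key1 x hx p hpx]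
          exact p.2.le.trans (H p ⟨x, hpx⟩).2
        · rw [key2 x hx hlt hp]; exact hqm
      · have hxt : x = t := le_antisymm (by_contra fun h => hlt (lt_of_le_of_ne hx
          (fun he => h (he ▸ le_refl _)))) hx
        subst hxt
        rw [key3 hx]
    refine ⟨fun x => ⟨g x.1 x.2, keyq x.1 x.2⟩, ?_, ?_, ?_⟩
    · -- surjectivity
      rintro ⟨y, hy⟩
      rcases hy.lt_or_eq with hlt | heq
      · obtain ⟨p0, hqp0, hp0y⟩ := exists_covBy_le_of_lt hlt
        set p : {p : Q // q ⋖ p} := ⟨p0, hqp0⟩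
        obtain ⟨z, hz⟩ := Hsurj p ⟨y, hp0y⟩
        refine ⟨⟨z.1, (f p).2.le.trans z.2⟩, ?_⟩
        apply Subtype.ext
        show g z.1 ((f p).2.le.trans z.2) = y
        rw [key1 z.1 ((f p).2.le.trans z.2) p z.2]
        simpa using congrArg Subtype.val hz
      · exact ⟨⟨t, le_refl t⟩, Subtype.ext (by simpa [key3] using heq)⟩
    · -- monotone
      intro a b hab
      have hab' : a.1 ≤ b.1 := hab
      show g a.1 a.2 ≤ g b.1 b.2
      by_cases hlt : t < a.1
      · by_cases hp : ∃ p : {p : Q // q ⋖ p}, (f p).1 ≤ a.1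
        · obtain ⟨p, hpa⟩ := hp
          rw [key1 a.1 a.2 p hpa, key1 b.1 b.2 p (hpa.trans hab')]
          exact (Hpm p).1 (show (⟨a.1, hpa⟩ : {x : T // (f p).1 ≤ x}) ≤
            ⟨b.1, hpa.trans hab'⟩ from hab')
        · have hpb : ¬ ∃ p : {p : Q // q ⋖ p}, (f p).1 ≤ b.1 := by
            rintro ⟨p, hpb⟩
            refine hp ⟨p, ?_⟩
            have : (f p).1 = S a.1 hlt := tree_succ_unique htree (f p).2 (hS1 a.1 hlt) hpb
              ((hS2 a.1 hlt).trans hab')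
            exact this ▸ hS2 a.1 hlt
          rw [key2 a.1 a.2 hlt hp, key2 b.1 b.2 (hlt.trans_le hab') hpb]
      · have hat : a.1 = t := le_antisymm (by_contra fun h => hlt (lt_of_le_of_ne a.2
          (fun he => h (he ▸ le_refl _)))) a.2
        rw [key3' a.1 a.2 hat]
        exact keyq b.1 b.2
    · -- back property
      intro x y hxy
      have hxy' : g x.1 x.2 ≤ y.1 := hxy
      by_cases hlt : t < x.1
      · by_cases hp : ∃ p : {p : Q // q ⋖ p}, (f p).1 ≤ x.1
        · obtain ⟨p, hpx⟩ := hp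
          have h1 := key1 x.1 x.2 p hpx
          have hpy : p.1 ≤ y.1 := (H p ⟨x.1, hpx⟩).2.trans (h1 ▸ hxy')
          obtain ⟨w, hxw, hw⟩ := (Hpm p).2 ⟨x.1, hpx⟩ ⟨y.1, hpy⟩
            (show (H p ⟨x.1, hpx⟩).1 ≤ y.1 from h1 ▸ hxy')
          refine ⟨⟨w.1, x.2.trans hxw⟩, hxw, ?_⟩
          apply Subtype.ext
          show g w.1 (x.2.trans hxw) = y.1
          rw [key1 w.1 (x.2.trans hxw) p (hpx.trans hxw)]
          simpa using congrArg Subtype.val hw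
        · have hgm : g x.1 x.2 = m := key2 x.1 x.2 hlt hp
          have hym : y.1 = m := hmmax y.1 (hgm ▸ hxy')
          exact ⟨x, le_refl x, Subtype.ext (show g x.1 x.2 = y.1 by rw [hgm, hym])⟩
      · have hxt : x.1 = t := le_antisymm (by_contra fun h => hlt (lt_of_le_of_ne x.2
          (fun he => h (he ▸ le_refl _)))) x.2
        have hgq : g x.1 x.2 = q := key3' x.1 x.2 hxt
        rcases (y.2).lt_or_eq with hqy | hqy
        · obtain ⟨p0, hqp0, hp0y⟩ := exists_covBy_le_of_lt hqy
          set p : {p : Q // q ⋖ p} := ⟨p0, hqp0⟩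
          obtain ⟨z, hz⟩ := Hsurj p ⟨y.1, hp0y⟩
          refine ⟨⟨z.1, (f p).2.le.trans z.2⟩, ?_, ?_⟩
          · show x.1 ≤ z.1
            rw [hxt]
            exact (f p).2.le.trans z.2
          · apply Subtype.ext
            show g z.1 ((f p).2.le.trans z.2) = y.1
            rw [key1 z.1 ((f p).2.le.trans z.2) p z.2]
            simpa using congrArg Subtype.val hz
        · exact ⟨x, le_refl x, Subtype.ext (show g x.1 x.2 = y.1 by rw [hgq, ← hqy])⟩
end
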